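/- arXiv:2506.16651 — 7 statements merged into one kernel-verified Lean document; each statement's English description precedes it below -/
import Mathlib

section
/- Let m ≥ 1 and d ≥ 0 be integers, let ε ∈ (0,1], and let M be an integer with M ≥ (2^d/ε)·max(2m, 8). Then for every p ∈ [0,1], p · Pr[X ≤ m] ≤ ε/2^d, where X is a Binomial(M, p) random variable (the number of successes among M independent Bernoulli(p) trials). -/
open scoped Classical

/-- Points of the cube `{±1}^n`, encoded as `Fin n → Bool`. -/
abbrev Cube (n : ℕ) := Fin n → Bool

/-- Restrictions `ρ ∈ {±1,⋆}^n`, with `none` playing the role of `⋆`. -/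
abbrev Rst (n : ℕ) := Fin n → Option Bool

/-- Labeled examples. -/
abbrev Lab (n : ℕ) := Cube n × Bool

/-- `x` is consistent with the restriction `ρ`. -/
def Consistent {n : ℕ} (x : Cube n) (ρ : Rst n) : Prop :=
  ∀ i : Fin n, ∀ b : Bool, ρ i = some b → x i = b

/-- The depth (number of non-⋆ coordinates) of a restriction. -/
def rdepth {n : ℕ} (ρ : Rst n) : ℕ :=
  (Finset.univ.filter (fun i => ρ i ≠ none)).card

/-- `IsDT n d T` : `T` is the set of leaf restrictions of a depth-`d` decision tree over `{±1}^n`. -/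
inductive IsDT (n : ℕ) : ℕ → Finset (Rst n) → Prop
  | leaf : IsDT n 0 {fun _ => none}
  | node {d : ℕ} (i : Fin n) {T₀ T₁ : Finset (Rst n)} :
      IsDT n d T₀ → IsDT n d T₁ →
      (∀ ℓ ∈ T₀, ℓ i = none) → (∀ ℓ ∈ T₁, ℓ i = none) →
      IsDT n (d + 1)
        (T₀.image (fun ℓ => Function.update ℓ i (some false)) ∪
         T₁.image (fun ℓ => Function.update ℓ i (some true)))

/-- Empirical error of a hypothesis on a labeled multiset. -/
noncomputable def errS {n : ℕ} (h : Cube n → Bool) (S : Multiset (Lab n)) : ℝ :=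
  ((S.filter (fun p => h p.1 ≠ p.2)).card : ℝ) / (S.card : ℝ)

/-- Empirical error of a partial (`Option Bool`-valued) hypothesis on a labeled multiset;
`⊥ = none` always counts as a misclassification. -/
noncomputable def errSo {n : ℕ} (h : Cube n → Option Bool) (S : Multiset (Lab n)) : ℝ :=
  ((S.filter (fun p => h p.1 ≠ some p.2)).card : ℝ) / (S.card : ℝ)

/-- True error of a hypothesis with respect to a distribution on labeled examples. -/
noncomputable def errD {n : ℕ} (h : Cube n → Bool) (D : Lab n → ℝ) : ℝ :=
  ∑ p : Lab n, if h p.1 ≠ p.2 then D p else 0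

/-- True error of a partial hypothesis with respect to a distribution on labeled examples. -/
noncomputable def errDo {n : ℕ} (h : Cube n → Option Bool) (D : Lab n → ℝ) : ℝ :=
  ∑ p : Lab n, if h p.1 ≠ some p.2 then D p else 0

/-- The multiset of samples of a tuple. -/
def toMS {α : Type*} {m : ℕ} (y : Fin m → α) : Multiset α := ↑(List.ofFn y)

/-- `T ∘ H` : the decision-tree-composed hypothesis. -/
noncomputable def treeHyp {n : ℕ} (T : Finset (Rst n)) (H : Rst n → Cube n → Bool)
    (x : Cube n) : Bool :=
  if h : ∃ ℓ, ℓ ∈ T ∧ Consistent x ℓ then H h.choose x else false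

/-- `P ∘ H` : the subcube-partition-composed hypothesis (`none` = ⊥ off the partition). -/
noncomputable def partHyp {n s : ℕ} (ρ : Fin s → Rst n) (H : Rst n → Cube n → Bool)
    (x : Cube n) : Option Bool :=
  if h : ∃ i, Consistent x (ρ i) then some (H (ρ h.choose) x) else none

/-- `L ∘ H` : the subcube-list-composed hypothesis (first consistent subcube wins). -/
noncomputable def listHyp {n : ℕ} (H : Rst n → Cube n → Bool) :
    List (Rst n) → Cube n → Option Bool
  | [], _ => none
  | π :: L, x => if Consistent x π then some (H π x) else listHyp H L x

/-- Mass of a distribution on the subcube of a restriction. -/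
noncomputable def rmass {n : ℕ} (D : Cube n → ℝ) (ρ : Rst n) : ℝ :=
  ∑ x ∈ Finset.univ.filter (fun x => Consistent x ρ), D x

/-- `D` conditioned on the subcube of the restriction `ρ`. -/
noncomputable def condD {n : ℕ} (D : Cube n → ℝ) (ρ : Rst n) : Cube n → ℝ :=
  fun x => if Consistent x ρ then D x / rmass D ρ else 0

/-- The labeled distribution `D_f` of `(x, f(x))`, `x ~ D`. -/
def labD {n : ℕ} (D : Cube n → ℝ) (f : Cube n → Bool) : Lab n → ℝ :=
  fun p => if p.2 = f p.1 then D p.1 else 0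

/-!
For `p ≤ ε / 2^d` the claim is trivial since a probability is at most `1`. Otherwise
`Mp ≥ M ε / 2^d ≥ max(2m, 8)`, and Chebyshev's inequality with `Var X = Mp(1-p)` gives
`(Mp/2)^2 · Pr[X ≤ m] ≤ Mp`, i.e. `p · Pr[X ≤ m] ≤ 4 / M ≤ ε / 2^d`.
The binomial weights are the values at `p` of the Bernstein polynomials, for which the
variance identity is `bernsteinPolynomial.variance`.
-/

open Polynomial Finset

namespace bernsteinPolynomial

lemma eval_eq {R : Type*} [CommRing R] (n ν : ℕ) (x : R) :
    (bernsteinPolynomial R n ν).eval x = n.choose ν * x ^ ν * (1 - x) ^ (n - ν) := by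
  simp [bernsteinPolynomial]

variable {x : ℝ}

lemma eval_nonneg (hx0 : 0 ≤ x) (hx1 : x ≤ 1) (n ν : ℕ) :
    0 ≤ (bernsteinPolynomial ℝ n ν).eval x := by
  have := sub_nonneg.2 hx1
  rw [eval_eq]
  positivity

lemma sum_mul_eval_le_sum_range {f : ℕ → ℝ} (hf : ∀ ν, 0 ≤ f ν) (hx0 : 0 ≤ x)
    (hx1 : x ≤ 1) (n : ℕ) (s : Finset ℕ) :
    ∑ ν ∈ s, f ν * (bernsteinPolynomial ℝ n ν).eval x
      ≤ ∑ ν ∈ range (n + 1), f ν * (bernsteinPolynomial ℝ n ν).eval x := by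
  have hvanish : ∀ ν ∈ s ∪ range (n + 1), ν ∉ range (n + 1) →
      f ν * (bernsteinPolynomial ℝ n ν).eval x = 0 := fun ν _ hν => by
    rw [eq_zero_of_lt ℝ (by simpa using hν), eval_zero, mul_zero]
  calc ∑ ν ∈ s, f ν * (bernsteinPolynomial ℝ n ν).eval x
      ≤ ∑ ν ∈ s ∪ range (n + 1), f ν * (bernsteinPolynomial ℝ n ν).eval x :=
        sum_le_sum_of_subset_of_nonneg subset_union_left
          fun ν _ _ => mul_nonneg (hf ν) (eval_nonneg hx0 hx1 n ν)
    _ = ∑ ν ∈ range (n + 1), f ν * (bernsteinPolynomial ℝ n ν).eval x :=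
        (sum_subset subset_union_right hvanish).symm

lemma sum_eval_le_one (hx0 : 0 ≤ x) (hx1 : x ≤ 1) (n : ℕ) (s : Finset ℕ) :
    ∑ ν ∈ s, (bernsteinPolynomial ℝ n ν).eval x ≤ 1 := by
  simpa [← eval_finsetSum, bernsteinPolynomial.sum] using
    sum_mul_eval_le_sum_range (f := 1) (fun _ => zero_le_one) hx0 hx1 n s

lemma sum_sq_mul_eval (n : ℕ) (x : ℝ) :
    ∑ ν ∈ range (n + 1), (n * x - ν) ^ 2 * (bernsteinPolynomial ℝ n ν).eval x
      = n * x * (1 - x) := by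
  simpa [eval_finsetSum] using congrArg (eval x) (variance ℝ n)

/-- Chebyshev's inequality for the lower tail of the binomial distribution. -/
lemma sq_mul_sum_range_eval_le (hx0 : 0 ≤ x) (hx1 : x ≤ 1) {n m : ℕ}
    (hm : (m : ℝ) ≤ n * x) :
    (n * x - m) ^ 2 * ∑ ν ∈ range (m + 1), (bernsteinPolynomial ℝ n ν).eval x
      ≤ n * x * (1 - x) := by
  have hdev : ∀ ν ∈ range (m + 1), (n * x - m) ^ 2 ≤ (n * x - ν) ^ 2 := fun ν hν => by
    have : (ν : ℝ) ≤ m := by exact_mod_cast Nat.lt_succ_iff.1 (mem_range.1 hν)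
    exact pow_le_pow_left₀ (by linarith) (by linarith) 2
  calc (n * x - m) ^ 2 * ∑ ν ∈ range (m + 1), (bernsteinPolynomial ℝ n ν).eval x
      ≤ ∑ ν ∈ range (m + 1), (n * x - ν) ^ 2 * (bernsteinPolynomial ℝ n ν).eval x := by
        rw [mul_sum]
        exact sum_le_sum fun ν hν =>
          mul_le_mul_of_nonneg_right (hdev ν hν) (eval_nonneg hx0 hx1 n ν)
    _ ≤ ∑ ν ∈ range (n + 1), (n * x - ν) ^ 2 * (bernsteinPolynomial ℝ n ν).eval x :=
        sum_mul_eval_le_sum_range (fun _ => sq_nonneg _) hx0 hx1 n _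
    _ = n * x * (1 - x) := sum_sq_mul_eval n x

lemma mul_sum_range_eval_le_four (hx0 : 0 ≤ x) (hx1 : x ≤ 1) {n m : ℕ}
    (hm : 2 * (m : ℝ) ≤ n * x) :
    n * x * ∑ ν ∈ range (m + 1), (bernsteinPolynomial ℝ n ν).eval x ≤ 4 := by
  set a : ℝ := n * x
  set S := ∑ ν ∈ range (m + 1), (bernsteinPolynomial ℝ n ν).eval x
  have hS : 0 ≤ S := sum_nonneg fun ν _ => eval_nonneg hx0 hx1 n ν
  rcases (mul_nonneg n.cast_nonneg hx0 : 0 ≤ a).eq_or_lt with ha | ha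
  · rw [show a = 0 from ha.symm, zero_mul]
    norm_num
  have hcheb := sq_mul_sum_range_eval_le hx0 hx1 (n := n) (m := m) (by linarith)
  have hhalf : (a / 2) ^ 2 ≤ (a - m) ^ 2 := pow_le_pow_left₀ (by linarith) (by linarith) 2
  refine le_of_mul_le_mul_left ?_ ha
  nlinarith [mul_le_mul_of_nonneg_right hhalf hS]

end bernsteinPolynomial

theorem binomial_weight_inequality_general
    (m d M : ℕ) (ε : ℝ) (hε0 : 0 < ε)
    (hM : ((2 : ℝ) ^ d / ε) * max (2 * (m : ℝ)) 8 ≤ (M : ℝ))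
    (p : ℝ) (hp0 : 0 ≤ p) (hp1 : p ≤ 1) :
    p * (∑ k ∈ Finset.range (m + 1),
        (M.choose k : ℝ) * p ^ k * (1 - p) ^ (M - k)) ≤ ε / 2 ^ d := by
  simp only [← bernsteinPolynomial.eval_eq]
  set t : ℝ := ε / 2 ^ d
  have ht : 0 < t := by positivity
  have htM : max (2 * (m : ℝ)) 8 ≤ t * M := by
    rw [← le_div_iff₀' (by positivity)] at hM
    exact hM.trans_eq (by simp only [t]; field_simp)
  rcases le_or_gt p t with hpt | hpt
  · calc _ ≤ t * 1 := mul_le_mul hpt (bernsteinPolynomial.sum_eval_le_one hp0 hp1 M _)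
          (sum_nonneg fun k _ => bernsteinPolynomial.eval_nonneg hp0 hp1 M k) ht.le
      _ = t := mul_one t
  · have h8 : 8 ≤ t * M := (le_max_right _ _).trans htM
    have hMp : t * M ≤ M * p := by
      rw [mul_comm]
      exact mul_le_mul_of_nonneg_left hpt.le M.cast_nonneg
    have hMpos : (0 : ℝ) < M := by nlinarith
    have h4 := bernsteinPolynomial.mul_sum_range_eval_le_four hp0 hp1 (n := M) (m := m)
      ((le_max_left _ _).trans (htM.trans hMp))
    refine le_of_mul_le_mul_right ?_ hMpos
    linarith

/-- the key (weight-inequality): for `M ≥ (2^d/ε)·max(2m,8)` and any `p ∈ [0,1]`,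
`p · Pr[Bin(M,p) ≤ m] ≤ ε/2^d`. -/
theorem binomial_weight_inequality
    (m d M : ℕ) (hm : 1 ≤ m) (ε : ℝ) (hε0 : 0 < ε) (hε1 : ε ≤ 1)
    (hM : ((2 : ℝ) ^ d / ε) * max (2 * (m : ℝ)) 8 ≤ (M : ℝ))
    (p : ℝ) (hp0 : 0 ≤ p) (hp1 : p ≤ 1) :
    p * (∑ k ∈ Finset.range (m + 1),
        (M.choose k : ℝ) * p ^ k * (1 - p) ^ (M - k)) ≤ ε / 2 ^ d :=
  binomial_weight_inequality_general m d M ε hε0 hM p hp0 hp1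
end

section
/- Let n ≥ 1, 0 ≤ d ≤ n, and let S ⊆ {±1}^n with |S| = 2^{n−1}. Suppose that for every restriction ℓ of depth at most d, (1/3)·2^{n−depth(ℓ)} ≤ |{x ∈ S : x consistent with ℓ}| ≤ (2/3)·2^{n−depth(ℓ)}. Then for every decision tree T of depth at most d and every probability distribution D' on {±1}^n whose probability mass function is constant on each leaf of T (i.e., D'(x) = D'(x') whenever x and x' are consistent with the same leaf ℓ ∈ T), the total variation distance between the uniform distribution on S and D' is at least 1/3. -/
open scoped Classical

/-! If `D'` is constant on the leaves of a tree of depth `d' ≤ d`, each leaf `ℓ` is a subcube of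
`2^(n-d')` points of equal mass, at most `2/3` of which lie in `S`; summing over the leaves,
which partition the cube, gives `D'(S) ≤ 2/3`. The uniform distribution on `S` gives `S` mass `1`,
and the total variation distance is at least the difference of the masses of any event. -/

open Finset

section Cube

variable {n : ℕ}

lemma consistent_update_iff {ℓ : Rst n} {i : Fin n} (h : ℓ i = none) (b : Bool) (x : Cube n) :
    Consistent x (Function.update ℓ i (some b)) ↔ Consistent x ℓ ∧ x i = b := by
  constructor
  · intro hx
    refine ⟨fun j c hj => ?_, hx i b (by simp)⟩
    have hji : j ≠ i := by rintro rfl; simp [h] at hj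
    exact hx j c (by rwa [Function.update_of_ne hji])
  · rintro ⟨hx, rfl⟩ j c hj
    by_cases hji : j = i
    · subst hji; simpa using hj
    · exact hx j c (by rwa [Function.update_of_ne hji] at hj)

lemma rdepth_update {ℓ : Rst n} {i : Fin n} (h : ℓ i = none) (b : Bool) :
    rdepth (Function.update ℓ i (some b)) = rdepth ℓ + 1 := by
  have hsupp : univ.filter (fun j => Function.update ℓ i (some b) j ≠ none)
      = insert i (univ.filter (fun j => ℓ j ≠ none)) := by
    ext j
    by_cases hji : j = i
    · subst hji; simp
    · simp [hji]
  rw [rdepth, rdepth, hsupp, card_insert_of_notMem (by simp [h])]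

lemma card_filter_consistent (ρ : Rst n) :
    #(univ.filter (Consistent · ρ)) = 2 ^ (n - rdepth ρ) := by
  have hpi : univ.filter (Consistent · ρ)
      = Fintype.piFinset fun i => univ.filter fun b => ∀ c, ρ i = some c → b = c := by
    ext x
    simp [Consistent, Fintype.mem_piFinset]
  have hfactor : ∀ i, #(univ.filter fun b : Bool => ∀ c, ρ i = some c → b = c)
      = if ρ i = none then 2 else 1 := by
    intro i
    cases ρ i <;> simp [filter_eq']
  have hfree : #(univ.filter fun i => ρ i = none) = n - rdepth ρ := by
    have hsplit := card_filter_add_card_filter_not (s := univ) fun i => ρ i = none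
    rw [card_univ, Fintype.card_fin] at hsplit
    simp only [rdepth, ne_eq]
    omega
  rw [hpi, Fintype.card_piFinset, Finset.prod_congr rfl fun i _ => hfactor i, prod_ite,
    prod_const, prod_const_one, mul_one, hfree]

lemma sum_filter_consistent_update {M : Type*} [AddCommMonoid M] {ℓ : Rst n} {i : Fin n}
    (h : ℓ i = none) (b : Bool) (s : Finset (Cube n)) (g : Cube n → M) :
    ∑ x ∈ s.filter (Consistent · (Function.update ℓ i (some b))), g x
      = ∑ x ∈ s.filter (Consistent · ℓ), if x i = b then g x else 0 := by
  rw [← sum_filter, filter_filter]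
  simp only [consistent_update_iff h]

lemma update_injOn_of_eq_none (i : Fin n) (b : Option Bool) (T : Finset (Rst n))
    (hT : ∀ ℓ ∈ T, ℓ i = none) : Set.InjOn (fun ℓ : Rst n => Function.update ℓ i b) T := by
  intro ℓ hℓ ℓ' hℓ' heq
  have hback : ∀ ℓ ∈ T, Function.update (Function.update ℓ i b) i none = ℓ := fun ℓ hℓ => by
    rw [Function.update_idem, ← hT ℓ hℓ, Function.update_eq_self]
  rw [← hback ℓ hℓ, ← hback ℓ' hℓ']
  exact congrArg (Function.update · i none) heq

end Cube

lemma sum_filter_le_mul_sum_filter_of_const {α : Type*} [Fintype α] {S : Finset α}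
    {p : α → Prop} [DecidablePred p] {f : α → ℝ} (hf₀ : ∀ x, 0 ≤ f x)
    (hf : ∀ x y, p x → p y → f x = f y) {a : ℝ}
    (hcard : (#(S.filter p) : ℝ) ≤ a * #(univ.filter p)) :
    ∑ x ∈ S.filter p, f x ≤ a * ∑ x ∈ univ.filter p, f x := by
  by_cases hp : ∃ y, p y
  · obtain ⟨y, hy⟩ := hp
    have hconst : ∀ s : Finset α, ∑ x ∈ s.filter p, f x = #(s.filter p) * f y := fun s => by
      rw [sum_congr rfl fun x hx => hf x y (mem_filter.1 hx).2 hy, sum_const, nsmul_eq_mul]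
    rw [hconst, hconst, ← mul_assoc]
    exact mul_le_mul_of_nonneg_right hcard (hf₀ y)
  · push Not at hp
    simp [filter_false_of_mem fun x _ => hp x]

namespace IsDT

variable {n d : ℕ} {T : Finset (Rst n)}

lemma rdepth_of_mem (hT : IsDT n d T) : ∀ ℓ ∈ T, rdepth ℓ = d := by
  induction hT with
  | leaf => simp [rdepth]
  | node i _ _ e₀ e₁ ih₀ ih₁ =>
    simp only [mem_union, mem_image]
    rintro _ (⟨ℓ, hℓ, rfl⟩ | ⟨ℓ, hℓ, rfl⟩)
    · rw [rdepth_update (e₀ ℓ hℓ), ih₀ ℓ hℓ]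
    · rw [rdepth_update (e₁ ℓ hℓ), ih₁ ℓ hℓ]

lemma sum_sum_filter_consistent {M : Type*} [AddCommMonoid M] (hT : IsDT n d T)
    (s : Finset (Cube n)) (g : Cube n → M) :
    ∑ ℓ ∈ T, ∑ x ∈ s.filter (Consistent · ℓ), g x = ∑ x ∈ s, g x := by
  induction hT generalizing g with
  | leaf => simp [Consistent]
  | @node _ i T₀ T₁ _ _ e₀ e₁ ih₀ ih₁ =>
    have hdisj : Disjoint (T₀.image fun ℓ => Function.update ℓ i (some false))
        (T₁.image fun ℓ => Function.update ℓ i (some true)) := by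
      simp only [disjoint_left, mem_image]
      rintro _ ⟨ℓ₀, -, rfl⟩ ⟨ℓ₁, -, h⟩
      simpa using congrFun h i
    rw [sum_union hdisj, sum_image (update_injOn_of_eq_none i _ T₀ e₀),
      sum_image (update_injOn_of_eq_none i _ T₁ e₁),
      sum_congr rfl fun ℓ hℓ => sum_filter_consistent_update (e₀ ℓ hℓ) false s g,
      sum_congr rfl fun ℓ hℓ => sum_filter_consistent_update (e₁ ℓ hℓ) true s g,
      ih₀, ih₁, ← sum_add_distrib]
    exact sum_congr rfl fun x _ => by cases x i <;> simp

lemma sum_le_mul_sum (hT : IsDT n d T)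
    {S : Finset (Cube n)} {D : Cube n → ℝ} (hD₀ : ∀ x, 0 ≤ D x)
    (hconst : ∀ ℓ ∈ T, ∀ x x' : Cube n, Consistent x ℓ → Consistent x' ℓ → D x = D x')
    {a : ℝ} (hcard : ∀ ℓ ∈ T,
      (#(S.filter (Consistent · ℓ)) : ℝ) ≤ a * #(univ.filter (Consistent · ℓ))) :
    ∑ x ∈ S, D x ≤ a * ∑ x, D x :=
  calc ∑ x ∈ S, D x = ∑ ℓ ∈ T, ∑ x ∈ S.filter (Consistent · ℓ), D x :=
        (hT.sum_sum_filter_consistent S D).symm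
    _ ≤ ∑ ℓ ∈ T, a * ∑ x ∈ univ.filter (Consistent · ℓ), D x :=
        sum_le_sum fun ℓ hℓ =>
          sum_filter_le_mul_sum_filter_of_const hD₀ (hconst ℓ hℓ) (hcard ℓ hℓ)
    _ = a * ∑ x, D x := by rw [← mul_sum, hT.sum_sum_filter_consistent]

end IsDT

lemma sum_sub_sum_le_half_sum_abs_sub {α : Type*} [Fintype α] {P Q : α → ℝ}
    (h : ∑ x, P x = ∑ x, Q x) (A : Finset α) :
    ∑ x ∈ A, P x - ∑ x ∈ A, Q x ≤ (1 / 2) * ∑ x, |P x - Q x| := by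
  have hA : ∑ x ∈ A, (P x - Q x) ≤ ∑ x ∈ A, |P x - Q x| :=
    sum_le_sum fun x _ => le_abs_self _
  have hAc : ∑ x ∈ Aᶜ, (Q x - P x) ≤ ∑ x ∈ Aᶜ, |P x - Q x| :=
    sum_le_sum fun x _ => abs_sub_comm (P x) (Q x) ▸ le_abs_self _
  rw [sum_sub_distrib] at hA hAc
  rw [← sum_add_sum_compl A P, ← sum_add_sum_compl A Q] at h
  rw [← sum_add_sum_compl A fun x => |P x - Q x|]
  linarith

lemma sum_ite_mem_inv_card {α : Type*} [DecidableEq α] {S s : Finset α} (hS : S.Nonempty)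
    (hSs : S ⊆ s) :
    ∑ x ∈ s, (if x ∈ S then (#S : ℝ)⁻¹ else 0) = 1 := by
  rw [sum_ite_mem, inter_eq_right.2 hSs, sum_const, nsmul_eq_mul,
    mul_inv_cancel₀ (Nat.cast_ne_zero.2 hS.card_ne_zero)]

theorem far_from_all_shallow_tree_distributions_general
    (n d : ℕ)
    (S : Finset (Cube n)) (hS : S.card = 2 ^ (n - 1))
    (hcount : ∀ ℓ : Rst n, rdepth ℓ ≤ d →
      (1 / 3 : ℝ) * 2 ^ (n - rdepth ℓ) ≤ ((S.filter (fun x => Consistent x ℓ)).card : ℝ) ∧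
      ((S.filter (fun x => Consistent x ℓ)).card : ℝ) ≤ (2 / 3 : ℝ) * 2 ^ (n - rdepth ℓ))
    (d' : ℕ) (hd' : d' ≤ d) (T : Finset (Rst n)) (hT : IsDT n d' T)
    (D' : Cube n → ℝ) (hD'0 : ∀ x, 0 ≤ D' x) (hD'1 : ∑ x : Cube n, D' x = 1)
    (hconst : ∀ ℓ ∈ T, ∀ x x' : Cube n, Consistent x ℓ → Consistent x' ℓ → D' x = D' x') :
    (1 / 3 : ℝ) ≤
      (1 / 2) * ∑ x : Cube n, |(if x ∈ S then ((S.card : ℝ))⁻¹ else 0) - D' x| := by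
  have hSne : S.Nonempty := by rw [← card_pos, hS]; positivity
  have hleaf : ∀ ℓ ∈ T,
      (#(S.filter (Consistent · ℓ)) : ℝ) ≤ 2 / 3 * #(univ.filter (Consistent · ℓ)) := by
    intro ℓ hℓ
    rw [card_filter_consistent]
    exact_mod_cast (hcount ℓ (hT.rdepth_of_mem ℓ hℓ ▸ hd')).2
  have hmass : ∑ x ∈ S, D' x ≤ 2 / 3 := by
    simpa [hD'1] using hT.sum_le_mul_sum hD'0 hconst hleaf
  have htv := sum_sub_sum_le_half_sum_abs_sub
    ((sum_ite_mem_inv_card hSne (subset_univ S)).trans hD'1.symm) S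
  rw [sum_ite_mem_inv_card hSne Subset.rfl] at htv
  linarith

/-- deterministic core of the lower-bound lemma: if every
restriction of depth ≤ d captures between 1/3 and 2/3 of its subcube's points of `S`
(with `|S| = 2^{n−1}`), then the uniform distribution on `S` is 1/3-far in TV distance from
every distribution whose mass function is constant on each leaf of a depth-≤d decision tree. -/
theorem far_from_all_shallow_tree_distributions
    (n d : ℕ) (hn : 1 ≤ n) (hd : d ≤ n)
    (S : Finset (Cube n)) (hS : S.card = 2 ^ (n - 1))
    (hcount : ∀ ℓ : Rst n, rdepth ℓ ≤ d →
      (1 / 3 : ℝ) * 2 ^ (n - rdepth ℓ) ≤ ((S.filter (fun x => Consistent x ℓ)).card : ℝ) ∧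
      ((S.filter (fun x => Consistent x ℓ)).card : ℝ) ≤ (2 / 3 : ℝ) * 2 ^ (n - rdepth ℓ))
    (d' : ℕ) (hd' : d' ≤ d) (T : Finset (Rst n)) (hT : IsDT n d' T)
    (D' : Cube n → ℝ) (hD'0 : ∀ x, 0 ≤ D' x) (hD'1 : ∑ x : Cube n, D' x = 1)
    (hconst : ∀ ℓ ∈ T, ∀ x x' : Cube n, Consistent x ℓ → Consistent x' ℓ → D' x = D' x') :
    (1 / 3 : ℝ) ≤
      (1 / 2) * ∑ x : Cube n, |(if x ∈ S then ((S.card : ℝ))⁻¹ else 0) - D' x| :=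
  far_from_all_shallow_tree_distributions_general n d S hS hcount d' hd' T hT D' hD'0 hD'1 hconst
end

section
/- Let ε ≥ 0, let ε_a ∈ (0,1), let k ≥ 1 be an integer, and let 1 = r₁ ≥ r₂ ≥ … ≥ r_k ≥ r_{k+1} ≥ 0 be reals with r_k ≥ ε_a and r_{k+1} ≤ ε_a. Let ℓ₁, …, ℓ_k ∈ [0,1] satisfy ℓ_i ≤ 2ε/r_i for every i ∈ [k]. Then r_{k+1} + Σ_{i=1}^{k} (r_i − r_{i+1})·ℓ_i ≤ ε_a + 2ε·(1 + ln(1/ε_a)). -/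
/-!
On the interval `[r (i+1), r i]` the bound `ℓ i ≤ 2ε / r i` gives
`(r i - r (i+1)) ℓ i ≤ 2ε (1 - r (i+1) / r i) ≤ 2ε log (r i / r (i+1))`, so the error terms telescope
to `2ε log (r 1 / r k)` as long as `r` stays positive. The last step is split at `εa`: the part above
`εa` contributes `2ε log (r k / εa)`, and the part below it, together with `r (k+1)`, at most `εa`.
-/

open Finset Real

lemma sub_mul_le_mul_log_sub_log {a b c ℓ : ℝ} (hc : 0 ≤ c) (hb : 0 < b) (hba : b ≤ a)
    (hℓ : ℓ ≤ c / a) : (a - b) * ℓ ≤ c * (log a - log b) := by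
  have ha : 0 < a := hb.trans_le hba
  calc (a - b) * ℓ ≤ (a - b) * (c / a) := mul_le_mul_of_nonneg_left hℓ (sub_nonneg.2 hba)
    _ = c * (1 - (a / b)⁻¹) := by field_simp
    _ ≤ c * log (a / b) := mul_le_mul_of_nonneg_left (one_sub_inv_le_log_of_pos (by positivity)) hc
    _ = c * (log a - log b) := by rw [log_div ha.ne' hb.ne']

lemma sum_Icc_sub_mul_le_mul_log_sub_log {c : ℝ} (hc : 0 ≤ c) (r ℓ : ℕ → ℝ) (n : ℕ)
    (hmono : ∀ i ∈ Icc 1 n, r (i + 1) ≤ r i) (hpos : 0 < r (n + 1))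
    (hℓ : ∀ i ∈ Icc 1 n, ℓ i ≤ c / r i) :
    ∑ i ∈ Icc 1 n, (r i - r (i + 1)) * ℓ i ≤ c * (log (r 1) - log (r (n + 1))) := by
  induction n with
  | zero => simp
  | succ n ih =>
    have hlast : n + 1 ∈ Icc 1 (n + 1) := by simp
    have hstep := sub_mul_le_mul_log_sub_log hc hpos (hmono _ hlast) (hℓ _ hlast)
    have hhead := ih (fun i hi => hmono i (Icc_subset_Icc_right n.le_succ hi))
      (hpos.trans_le (hmono _ hlast)) (fun i hi => hℓ i (Icc_subset_Icc_right n.le_succ hi))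
    rw [sum_Icc_succ_top (by omega)]
    linarith

theorem findsubcube_telescoping_bound_general
    (ε εa : ℝ) (hε : 0 ≤ ε) (hεa0 : 0 < εa)
    (k : ℕ) (hk : 1 ≤ k) (r ℓ : ℕ → ℝ)
    (hr1 : r 1 = 1)
    (hmono : ∀ i, 1 ≤ i → i ≤ k → r (i + 1) ≤ r i)
    (hrk : εa ≤ r k) (hrk1 : r (k + 1) ≤ εa)
    (hℓ : ∀ i, 1 ≤ i → i ≤ k → 0 ≤ ℓ i ∧ ℓ i ≤ 1 ∧ ℓ i ≤ 2 * ε / r i) :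
    r (k + 1) + ∑ i ∈ Finset.Icc 1 k, (r i - r (i + 1)) * ℓ i ≤
      εa + 2 * ε * (1 + Real.log (1 / εa)) := by
  obtain ⟨m, rfl⟩ : ∃ m, k = m + 1 := ⟨k - 1, by omega⟩
  have h2ε : 0 ≤ 2 * ε := by linarith
  have hhead := sum_Icc_sub_mul_le_mul_log_sub_log h2ε r ℓ m
    (fun i hi => hmono i (mem_Icc.1 hi).1 (by grind)) (hεa0.trans_le hrk)
    (fun i hi => (hℓ i (mem_Icc.1 hi).1 (by grind)).2.2)
  obtain ⟨-, hℓ1, hℓc⟩ := hℓ (m + 1) hk le_rfl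
  have habove := sub_mul_le_mul_log_sub_log h2ε hεa0 hrk hℓc
  have hbelow : (εa - r (m + 1 + 1)) * ℓ (m + 1) ≤ εa - r (m + 1 + 1) :=
    mul_le_of_le_one_right (sub_nonneg.2 hrk1) hℓ1
  rw [sum_Icc_succ_top hk, one_div, log_inv]
  rw [hr1, log_one] at hhead
  linarith

/-- the telescoping error bound in the analysis of `FindSubcube`. -/
theorem findsubcube_telescoping_bound
    (ε εa : ℝ) (hε : 0 ≤ ε) (hεa0 : 0 < εa) (hεa1 : εa < 1)
    (k : ℕ) (hk : 1 ≤ k) (r ℓ : ℕ → ℝ)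
    (hr1 : r 1 = 1)
    (hmono : ∀ i, 1 ≤ i → i ≤ k → r (i + 1) ≤ r i)
    (hrpos : 0 ≤ r (k + 1))
    (hrk : εa ≤ r k) (hrk1 : r (k + 1) ≤ εa)
    (hℓ : ∀ i, 1 ≤ i → i ≤ k → 0 ≤ ℓ i ∧ ℓ i ≤ 1 ∧ ℓ i ≤ 2 * ε / r i) :
    r (k + 1) + ∑ i ∈ Finset.Icc 1 k, (r i - r (i + 1)) * ℓ i ≤
      εa + 2 * ε * (1 + Real.log (1 / εa)) :=
  findsubcube_telescoping_bound_general ε εa hε hεa0 k hk r ℓ hr1 hmono hrk hrk1 hℓ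
end

section
/- Let D and D' be probability distributions on a finite set X with d_TV(D, D') ≤ η, and let X = ℓ₁ ⊔ … ⊔ ℓ_k be a partition of X. Then Σ_{j : D'(ℓ_j) > 0} D'(ℓ_j) · d_TV(D|_{ℓ_j}, D'|_{ℓ_j}) ≤ 2η, where D|_ℓ denotes D conditioned on the event ℓ, and by convention d_TV(D|_ℓ, D'|_ℓ) := 1 when D(ℓ) = 0 < D'(ℓ). -/
open scoped Classical

/-- TV distance between the conditionals of `D` and `D'` on the event `s`,
with the convention that it equals `1` when `D(s) = 0` (and `D'(s) > 0`). -/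
noncomputable def condTV {X : Type*} [Fintype X] (D D' : X → ℝ) (s : Finset X) : ℝ :=
  if (∑ x ∈ s, D x) = 0 then 1
  else (1 / 2 : ℝ) * ∑ x ∈ s, |D x / (∑ x' ∈ s, D x') - D' x / (∑ x' ∈ s, D' x')|

/-!
On a piece `s` with `a = D(s)` and `b = D'(s) > 0`, the weighted conditional distance is
`b · d_TV(D|_s, D'|_s) = ½ Σ_s |(b/a) D − D'| ≤ ½ (Σ_s |D − D'| + |b − a|) ≤ Σ_s |D − D'|`,
and if `a = 0` it is `b ≤ Σ_s |D − D'|`. Summing over the disjoint pieces gives at most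
`Σ_x |D − D'| ≤ 2η`.
-/

open Finset

section Piece

variable {ι : Type*} (s : Finset ι) (D D' : ι → ℝ)

lemma abs_sum_sub_sum_le_sum_abs_sub :
    |∑ x ∈ s, D x - ∑ x ∈ s, D' x| ≤ ∑ x ∈ s, |D x - D' x| := by
  rw [← sum_sub_distrib]
  exact abs_sum_le_sum_abs _ _

lemma sum_le_sum_abs_sub_of_sum_eq_zero (hD0 : ∀ x ∈ s, 0 ≤ D x) (ha : ∑ x ∈ s, D x = 0) :
    ∑ x ∈ s, D' x ≤ ∑ x ∈ s, |D x - D' x| := by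
  have hD : ∀ x ∈ s, D x = 0 := (sum_eq_zero_iff_of_nonneg hD0).mp ha
  calc ∑ x ∈ s, D' x ≤ ∑ x ∈ s, |D' x| := sum_le_sum fun x _ => le_abs_self _
    _ = ∑ x ∈ s, |D x - D' x| := sum_congr rfl fun x hx => by rw [hD x hx, zero_sub, abs_neg]

lemma sum_abs_mul_sub_le (hD0 : ∀ x ∈ s, 0 ≤ D x) (t : ℝ) :
    ∑ x ∈ s, |t * D x - D' x| ≤ ∑ x ∈ s, |D x - D' x| + |t - 1| * ∑ x ∈ s, D x := by
  rw [mul_sum, ← sum_add_distrib]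
  refine sum_le_sum fun x hx => ?_
  calc |t * D x - D' x| = |(D x - D' x) + (t - 1) * D x| := by ring_nf
    _ ≤ |D x - D' x| + |(t - 1) * D x| := abs_add_le _ _
    _ = |D x - D' x| + |t - 1| * D x := by rw [abs_mul, abs_of_nonneg (hD0 x hx)]

lemma mul_sum_abs_div_sub_div_le (hD0 : ∀ x ∈ s, 0 ≤ D x) (ha : 0 < ∑ x ∈ s, D x)
    (hb : 0 < ∑ x ∈ s, D' x) :
    (∑ x ∈ s, D' x) * ∑ x ∈ s, |D x / ∑ y ∈ s, D y - D' x / ∑ y ∈ s, D' y|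
      ≤ 2 * ∑ x ∈ s, |D x - D' x| := by
  set a := ∑ x ∈ s, D x
  set b := ∑ x ∈ s, D' x
  have hrescale : b * ∑ x ∈ s, |D x / a - D' x / b| = ∑ x ∈ s, |b / a * D x - D' x| := by
    rw [mul_sum]
    refine sum_congr rfl fun x _ => ?_
    rw [← abs_of_pos hb, ← abs_mul, abs_of_pos hb]
    congr 1
    field_simp
  have hmass : |b / a - 1| * a = |b - a| := by
    rw [← abs_of_pos ha, ← abs_mul, abs_of_pos ha, sub_mul, div_mul_cancel₀ _ ha.ne', one_mul]
  calc b * ∑ x ∈ s, |D x / a - D' x / b|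
      ≤ ∑ x ∈ s, |D x - D' x| + |b - a| := by
        rw [hrescale, ← hmass]
        exact sum_abs_mul_sub_le s D D' hD0 _
    _ ≤ 2 * ∑ x ∈ s, |D x - D' x| := by
        have := abs_sum_sub_sum_le_sum_abs_sub s D D'
        rw [abs_sub_comm] at this
        linarith

end Piece

lemma mul_condTV_le_sum_abs_sub {X : Type*} [Fintype X] (D D' : X → ℝ) (s : Finset X)
    (hD0 : ∀ x ∈ s, 0 ≤ D x) (hb : 0 < ∑ x ∈ s, D' x) :
    (∑ x ∈ s, D' x) * condTV D D' s ≤ ∑ x ∈ s, |D x - D' x| := by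
  rcases (sum_nonneg hD0).eq_or_lt with ha | ha
  · rw [condTV, if_pos ha.symm, mul_one]
    exact sum_le_sum_abs_sub_of_sum_eq_zero s D D' hD0 ha.symm
  · rw [condTV, if_neg ha.ne', mul_left_comm]
    linarith [mul_sum_abs_div_sub_div_le s D D' hD0 ha hb]

lemma sum_sum_le_sum_of_pairwiseDisjoint {X ι M : Type*} [Fintype X] [Fintype ι]
    [AddCommMonoid M] [PartialOrder M] [IsOrderedAddMonoid M] {f : X → M} (hf : 0 ≤ f)
    {ℓ : ι → Finset X} (hdisj : (Set.univ : Set ι).PairwiseDisjoint ℓ) :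
    ∑ j, ∑ x ∈ ℓ j, f x ≤ ∑ x, f x := by
  rw [← sum_biUnion (by simpa using hdisj)]
  exact sum_le_univ_sum_of_nonneg hf

theorem tv_distributes_over_partition_general
    {X : Type*} [Fintype X] (η : ℝ)
    (D D' : X → ℝ)
    (hD0 : ∀ x, 0 ≤ D x)
    (hTV : (1 / 2 : ℝ) * (∑ x : X, |D x - D' x|) ≤ η)
    (k : ℕ) (ℓ : Fin k → Finset X)
    (hdisj : ∀ i j : Fin k, i ≠ j → Disjoint (ℓ i) (ℓ j)) :
    ∑ j ∈ Finset.univ.filter (fun j : Fin k => 0 < ∑ x ∈ ℓ j, D' x),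
        (∑ x ∈ ℓ j, D' x) * condTV D D' (ℓ j) ≤ 2 * η := by
  calc ∑ j ∈ univ.filter (fun j : Fin k => 0 < ∑ x ∈ ℓ j, D' x),
        (∑ x ∈ ℓ j, D' x) * condTV D D' (ℓ j)
      ≤ ∑ j ∈ univ.filter (fun j : Fin k => 0 < ∑ x ∈ ℓ j, D' x), ∑ x ∈ ℓ j, |D x - D' x| :=
        sum_le_sum fun j hj =>
          mul_condTV_le_sum_abs_sub D D' (ℓ j) (fun x _ => hD0 x) (mem_filter.mp hj).2
    _ ≤ ∑ j, ∑ x ∈ ℓ j, |D x - D' x| :=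
        sum_le_sum_of_subset_of_nonneg (filter_subset _ _)
          fun j _ _ => sum_nonneg fun x _ => abs_nonneg _
    _ ≤ ∑ x, |D x - D' x| :=
        sum_sum_le_sum_of_pairwiseDisjoint (fun x => abs_nonneg _)
          fun i _ j _ hij => hdisj i j hij
    _ ≤ 2 * η := by linarith

/-- total variation distance distributes over the pieces of a partition:
`Σ_{j : D'(ℓ_j) > 0} D'(ℓ_j) · d_TV(D|_{ℓ_j}, D'|_{ℓ_j}) ≤ 2η`. -/
theorem tv_distributes_over_partition
    {X : Type*} [Fintype X] (η : ℝ)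
    (D D' : X → ℝ)
    (hD0 : ∀ x, 0 ≤ D x) (hD1 : ∑ x : X, D x = 1)
    (hD'0 : ∀ x, 0 ≤ D' x) (hD'1 : ∑ x : X, D' x = 1)
    (hTV : (1 / 2 : ℝ) * (∑ x : X, |D x - D' x|) ≤ η)
    (k : ℕ) (ℓ : Fin k → Finset X)
    (hdisj : ∀ i j : Fin k, i ≠ j → Disjoint (ℓ i) (ℓ j))
    (hcover : ∀ x : X, ∃ j : Fin k, x ∈ ℓ j) :
    ∑ j ∈ Finset.univ.filter (fun j : Fin k => 0 < ∑ x ∈ ℓ j, D' x),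
        (∑ x ∈ ℓ j, D' x) * condTV D D' (ℓ j) ≤ 2 * η :=
  tv_distributes_over_partition_general η D D' hD0 hTV k ℓ hdisj
end

section
/- Let X be a finite set with |X| = N even, and let 1 ≤ m ≤ N/2. For every function A : X^m → [0,1]: if S is drawn uniformly at random among all subsets of X of size N/2 and then, conditionally on S, y₁, …, y_m are drawn i.i.d. uniform on S, then E_{S,y}[A(y₁,…,y_m)] ≤ m(m−1)/N + E[A(y₁,…,y_m)], where the last expectation is over a uniformly random m-tuple of distinct elements of X. -/
/-!
Let `w y` be the probability of the tuple `y` under the two-stage sampling, so that the left side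
is `∑ y, w y * A y`. Averaging over the uniformly random `S` makes `w` exchangeable: it takes one
common value on injective tuples, and since `w` has total mass at most one, that value is at most
`1 / N.descFactorial m`. Tuples with a repetition have mass at most `m(m-1)/(2|S|) = m(m-1)/N` for
every fixed `S`, by the birthday bound `n^m ≤ n.descFactorial m + C(m,2) n^(m-1)`, and `A ≤ 1`
on them.
-/

open Finset Function

theorem Nat.pow_succ_le_descFactorial_succ_add (n m : ℕ) :
    n ^ (m + 1) ≤ n.descFactorial (m + 1) + (m + 1).choose 2 * n ^ m := by
  induction m with
  | zero => simp
  | succ m ih =>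
    have hd : n * n.descFactorial (m + 1) ≤ n.descFactorial (m + 2) + (m + 1) * n ^ (m + 1) := by
      have hle := Nat.descFactorial_le_pow n (m + 1)
      rw [Nat.descFactorial_succ n (m + 1)]
      calc n * n.descFactorial (m + 1)
          ≤ (n - (m + 1) + (m + 1)) * n.descFactorial (m + 1) := by gcongr; omega
        _ ≤ (n - (m + 1)) * n.descFactorial (m + 1) + (m + 1) * n ^ (m + 1) := by
          rw [add_mul]; gcongr
    calc n ^ (m + 2) = n * n ^ (m + 1) := _root_.pow_succ' n (m + 1)
      _ ≤ n * (n.descFactorial (m + 1) + (m + 1).choose 2 * n ^ m) := by gcongr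
      _ = n * n.descFactorial (m + 1) + (m + 1).choose 2 * n ^ (m + 1) := by ring
      _ ≤ n.descFactorial (m + 2) + (m + 2).choose 2 * n ^ (m + 1) := by
        rw [Nat.choose_succ_succ' (m + 1), Nat.choose_one_right]; linarith

theorem sum_mul_le_sum_not_add_of_eq {ι : Type*} [Fintype ι] (q : ι → Prop) [DecidablePred q]
    {p A : ι → ℝ} {c : ℝ} (hp : ∀ i, 0 ≤ p i) (hmass : ∑ i, p i ≤ 1) (hc : ∀ i, q i → p i = c)
    (hA : ∀ i, 0 ≤ A i ∧ A i ≤ 1) :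
    ∑ i, p i * A i ≤ ∑ i with ¬q i, p i + ∑ i, (if q i then (#{i | q i} : ℝ)⁻¹ else 0) * A i := by
  have hc_le {i} (hi : q i) : c ≤ (#{i | q i} : ℝ)⁻¹ := by
    have hpos : (0 : ℝ) < #{i | q i} := by
      exact_mod_cast card_pos.2 ⟨i, mem_filter.2 ⟨mem_univ i, hi⟩⟩
    rw [← one_div, le_div_iff₀ hpos]
    calc c * #{i | q i} = ∑ j with q j, p j := by
          rw [sum_congr rfl fun j hj => hc j (mem_filter.1 hj).2, sum_const, nsmul_eq_mul, mul_comm]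
      _ ≤ ∑ j, p j := sum_le_sum_of_subset_of_nonneg (filter_subset _ _) fun j _ _ => hp j
      _ ≤ 1 := hmass
  rw [← sum_filter_add_sum_filter_not univ q, add_comm]
  simp only [ite_mul, zero_mul]
  rw [← sum_filter]
  refine add_le_add (sum_le_sum fun i _ => mul_le_of_le_one_right (hp i) (hA i).2)
    (sum_le_sum fun i hi => ?_)
  have hi := (mem_filter.1 hi).2
  rw [hc i hi]
  exact mul_le_mul_of_nonneg_right (hc_le hi) (hA i).1

section
variable {X : Type*} [Fintype X] [DecidableEq X]

theorem card_injective_forall_mem (m : ℕ) (S : Finset X) :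
    #{y : Fin m → X | Injective y ∧ ∀ i, y i ∈ S} = (#S).descFactorial m := by
  let e : {y : Fin m → X // Injective y ∧ ∀ i, y i ∈ S} ≃ (Fin m ↪ S) :=
    { toFun := fun y => ⟨fun i => ⟨y.1 i, y.2.2 i⟩, fun a b h => y.2.1 (congrArg Subtype.val h)⟩
      invFun := fun f => ⟨fun i => f i, fun a b h => f.injective (Subtype.ext h), fun i => (f i).2⟩
      left_inv := fun _ => rfl
      right_inv := fun _ => rfl }
  rw [← Fintype.card_subtype, Fintype.card_congr e, Fintype.card_embedding_eq, Fintype.card_fin,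
    Fintype.card_coe]

theorem sum_prod_ite_mem (m : ℕ) (S : Finset X) (c : ℝ) :
    ∑ y : Fin m → X, ∏ i, (if y i ∈ S then c else 0) = (#S * c) ^ m := by
  rw [← Fintype.sum_pow (fun x => if x ∈ S then c else 0), sum_ite_mem, univ_inter, sum_const,
    nsmul_eq_mul]

theorem sum_injective_prod_ite_mem (m : ℕ) (S : Finset X) (c : ℝ) :
    ∑ y : Fin m → X with Injective y, ∏ i, (if y i ∈ S then c else 0)
      = (#S).descFactorial m * c ^ m := by
  simp only [prod_ite_zero, mem_univ, true_implies, prod_const, card_univ, Fintype.card_fin]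
  rw [sum_ite, sum_const_zero, add_zero, sum_const, filter_filter, card_injective_forall_mem,
    nsmul_eq_mul]

theorem sum_not_injective_prod_ite_mem_le (m : ℕ) (S : Finset X) :
    ∑ y : Fin m → X with ¬Injective y, ∏ i, (if y i ∈ S then (#S : ℝ)⁻¹ else 0)
      ≤ m * (m - 1) / (2 * #S) := by
  rcases m with _ | m
  · simp [injective_of_subsingleton]
  have hsplit := sum_filter_add_sum_filter_not univ (fun y : Fin (m + 1) → X => Injective y)
    fun y => ∏ i, if y i ∈ S then (#S : ℝ)⁻¹ else 0
  rw [sum_prod_ite_mem, sum_injective_prod_ite_mem] at hsplit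
  rcases (#S).eq_zero_or_pos with hS | hS
  · simp [hS] at hsplit ⊢
  have hk : (0 : ℝ) < #S := by exact_mod_cast hS
  rw [mul_inv_cancel₀ hk.ne', one_pow] at hsplit
  have hbound := (Nat.cast_le (α := ℝ)).2 (Nat.pow_succ_le_descFactorial_succ_add (#S) m)
  push_cast [Nat.cast_choose_two] at hbound
  rw [eq_sub_of_add_eq' hsplit, sub_le_iff_le_add, inv_pow]
  push_cast
  calc (1 : ℝ) = (#S : ℝ) ^ (m + 1) / (#S : ℝ) ^ (m + 1) := (div_self (by positivity)).symm
    _ ≤ ((#S).descFactorial (m + 1) + (m + 1) * (m + 1 - 1) / 2 * (#S : ℝ) ^ m)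
          / (#S : ℝ) ^ (m + 1) := by gcongr
    _ = _ := by field_simp; ring

noncomputable def subsetIidWeight (k m : ℕ) (y : Fin m → X) : ℝ :=
  ∑ S ∈ (univ : Finset X).powersetCard k,
    (#((univ : Finset X).powersetCard k) : ℝ)⁻¹ * ∏ i, if y i ∈ S then (k : ℝ)⁻¹ else 0

theorem subsetIidWeight_nonneg (k m : ℕ) (y : Fin m → X) : 0 ≤ subsetIidWeight k m y := by
  unfold subsetIidWeight
  positivity

theorem sum_subsetIidWeight_le_one (k m : ℕ) : ∑ y, subsetIidWeight (X := X) k m y ≤ 1 := by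
  set K : ℝ := (#((univ : Finset X).powersetCard k) : ℝ)
  calc ∑ y, subsetIidWeight (X := X) k m y
        = ∑ S ∈ univ.powersetCard k, K⁻¹ * (k * (k : ℝ)⁻¹) ^ m := by
        simp only [subsetIidWeight]
        rw [sum_comm]
        refine sum_congr rfl fun S hS => ?_
        rw [← mul_sum, sum_prod_ite_mem, mem_powersetCard_univ.1 hS]
    _ ≤ ∑ S ∈ univ.powersetCard k, K⁻¹ :=
        sum_le_sum fun S _ => mul_le_of_le_one_right (by positivity)
          (pow_le_one₀ (by positivity) mul_inv_le_one)
    _ ≤ 1 := by rw [sum_const, nsmul_eq_mul]; exact mul_inv_le_one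

theorem subsetIidWeight_of_injective {k m : ℕ} (hmk : m ≤ k) {y : Fin m → X} (hy : Injective y) :
    subsetIidWeight k m y = (#((univ : Finset X).powersetCard k) : ℝ)⁻¹
      * (Fintype.card X - m).choose (k - m) * (k : ℝ)⁻¹ ^ m := by
  have hcard : #(univ.image y) = m := by
    rw [card_image_of_injective _ hy, card_univ, Fintype.card_fin]
  have hsub (S : Finset X) : (∀ i, y i ∈ S) ↔ univ.image y ⊆ S := by simp [image_subset_iff]
  simp only [subsetIidWeight, ← mul_sum, prod_ite_zero, mem_univ, true_implies, prod_const,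
    card_univ, Fintype.card_fin, hsub]
  rw [sum_ite, sum_const_zero, add_zero, sum_const, nsmul_eq_mul,
    card_filter_powersetCard_subset _ _ _ (subset_univ _) (hcard.trans_le hmk), hcard, card_univ]
  ring

theorem sum_not_injective_subsetIidWeight_le (k m : ℕ) :
    ∑ y : Fin m → X with ¬Injective y, subsetIidWeight k m y ≤ m * (m - 1) / (2 * k) := by
  set K : ℝ := (#((univ : Finset X).powersetCard k) : ℝ)
  calc ∑ y : Fin m → X with ¬Injective y, subsetIidWeight k m y
        = ∑ S ∈ univ.powersetCard k, K⁻¹ *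
            ∑ y : Fin m → X with ¬Injective y, ∏ i, if y i ∈ S then (#S : ℝ)⁻¹ else 0 := by
        simp only [subsetIidWeight]
        rw [sum_comm]
        refine sum_congr rfl fun S hS => ?_
        rw [← mul_sum, mem_powersetCard_univ.1 hS]
    _ ≤ ∑ S ∈ univ.powersetCard k, K⁻¹ * (m * (m - 1) / (2 * k)) := by
        refine sum_le_sum fun S hS => ?_
        grw [sum_not_injective_prod_ite_mem_le, mem_powersetCard_univ.1 hS]
    _ ≤ m * (m - 1) / (2 * k) := by
        rw [sum_const, nsmul_eq_mul, ← mul_assoc]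
        refine mul_le_of_le_one_left ?_ mul_inv_le_one
        rw [← div_div, ← Nat.cast_choose_two]
        positivity
end

theorem half_subset_iid_vs_without_replacement_general
    {X : Type*} [Fintype X] [DecidableEq X] (N m : ℕ)
    (hN : Fintype.card X = N) (hNeven : Even N) (hm : m ≤ N / 2)
    (A : (Fin m → X) → ℝ) (hA : ∀ y, 0 ≤ A y ∧ A y ≤ 1) :
    ∑ S ∈ (Finset.univ : Finset X).powersetCard (N / 2),
        ((((Finset.univ : Finset X).powersetCard (N / 2)).card : ℝ))⁻¹ *
          ∑ y : Fin m → X,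
            (∏ i : Fin m, (if y i ∈ S then (((N / 2 : ℕ) : ℝ))⁻¹ else 0)) * A y ≤
      (m : ℝ) * ((m : ℝ) - 1) / N +
        ∑ y : Fin m → X,
          (if Function.Injective y then ((Nat.descFactorial N m : ℝ))⁻¹ else 0) * A y := by
  have hinj : #{y : Fin m → X | Injective y} = N.descFactorial m := by
    simpa [hN] using card_injective_forall_mem m (univ : Finset X)
  have hhalf : (N : ℝ) = 2 * (N / 2 : ℕ) := by
    exact_mod_cast (Nat.two_mul_div_two_of_even hNeven).symm
  calc _ = ∑ y, subsetIidWeight (N / 2) m y * A y := by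
        simp only [subsetIidWeight, mul_sum, sum_mul, mul_assoc]
        exact sum_comm
    _ ≤ ∑ y with ¬Injective y, subsetIidWeight (N / 2) m y
          + ∑ y, (if Injective y then (#{y : Fin m → X | Injective y} : ℝ)⁻¹ else 0) * A y :=
        sum_mul_le_sum_not_add_of_eq _ (subsetIidWeight_nonneg _ _) (sum_subsetIidWeight_le_one _ _)
          (fun _ hy => subsetIidWeight_of_injective hm hy) hA
    _ ≤ _ := by
        rw [hinj]
        gcongr
        exact (sum_not_injective_subsetIidWeight_le _ _).trans_eq (by rw [hhalf])

/-- drawing a uniformly random half-subset `S` of `X` and then `m` i.i.d.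
uniform samples from `S`, the expectation of `A` is at most `m(m−1)/N` plus its expectation
under `m` uniform draws without replacement from all of `X`. -/
theorem half_subset_iid_vs_without_replacement
    {X : Type*} [Fintype X] [DecidableEq X] (N m : ℕ)
    (hN : Fintype.card X = N) (hNeven : Even N) (hm1 : 1 ≤ m) (hm : m ≤ N / 2)
    (A : (Fin m → X) → ℝ) (hA : ∀ y, 0 ≤ A y ∧ A y ≤ 1) :
    ∑ S ∈ (Finset.univ : Finset X).powersetCard (N / 2),
        ((((Finset.univ : Finset X).powersetCard (N / 2)).card : ℝ))⁻¹ *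
          ∑ y : Fin m → X,
            (∏ i : Fin m, (if y i ∈ S then (((N / 2 : ℕ) : ℝ))⁻¹ else 0)) * A y ≤
      (m : ℝ) * ((m : ℝ) - 1) / N +
        ∑ y : Fin m → X,
          (if Function.Injective y then ((Nat.descFactorial N m : ℝ))⁻¹ else 0) * A y :=
  half_subset_iid_vs_without_replacement_general N m hN hNeven hm A hA
end

section
/- Let C be a class of functions {±1}^n → {±1} and let 𝒟 be a family of distributions over {±1}^n that is closed under restrictions. Let A be a deterministic learner such that for every D ∈ 𝒟, every f ∈ C, and every k ≥ m, E_{S ~ (D_f)^k}[error(A(S), D_f)] ≤ ε. Let D* be a distribution over {±1}^n that has a depth-d decomposition into distributions in 𝒟, witnessed by a depth-d decision tree T*; let f ∈ C, and let m_train be an integer with m_train ≥ (2^d/ε)·max(2m, 8). Draw S_train consisting of m_train i.i.d. samples from D*_f and define H(ρ) := A((S_train)_ρ) for every restriction ρ. Then E_{S_train}[error(T*∘H, D*_f)] ≤ 2ε. -/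
open scoped Classical

/-!
The error of `T* ∘ H` splits over the leaves `ℓ` of `T*` as `∑ ℓ, D*(ℓ) · error(A(S_ℓ), D*_ℓ)`.
Given `|S_ℓ| = k`, the sample `S_ℓ` consists of `k` independent samples from `D*_ℓ ∈ 𝒟`, so leaf `ℓ`
contributes at most `D*(ℓ) · (ε + Pr[|S_ℓ| < m])`. As `|S_ℓ|` is binomial with mean
`m_train · D*(ℓ)`, Chebyshev's inequality gives `D*(ℓ) · Pr[|S_ℓ| < m] ≤ max(2m, 4) / m_train`
(trivially so when `m_train · D*(ℓ) < 2m`). Summing over the at most `2^d` leaves gives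
`ε + 2^d · max(2m, 4) / m_train ≤ 2ε`.
-/

section IidExpect

variable {α : Type*} [Fintype α]

noncomputable def iidExpect (W : α → ℝ) (N : ℕ) (F : Multiset α → ℝ) : ℝ :=
  ∑ y : Fin N → α, (∏ i, W (y i)) * F (toMS y)

variable {W : α → ℝ} {N : ℕ}

theorem iidExpect_zero (F : Multiset α → ℝ) : iidExpect W 0 F = F 0 := by
  simp [iidExpect, toMS]

theorem iidExpect_succ (F : Multiset α → ℝ) :
    iidExpect W (N + 1) F = ∑ a, W a * iidExpect W N (fun S => F (a ::ₘ S)) := by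
  rw [iidExpect, ← (Fin.consEquiv fun _ => α).sum_comp, Fintype.sum_prod_type]
  refine Finset.sum_congr rfl fun a _ => ?_
  simp [iidExpect, Finset.mul_sum, Fin.prod_univ_succ, toMS, List.ofFn_succ, mul_assoc]

theorem iidExpect_mono (hW : ∀ a, 0 ≤ W a) {F G : Multiset α → ℝ} (h : ∀ S, F S ≤ G S) :
    iidExpect W N F ≤ iidExpect W N G :=
  Finset.sum_le_sum fun _ _ =>
    mul_le_mul_of_nonneg_left (h _) (Finset.prod_nonneg fun _ _ => hW _)

theorem iidExpect_add (F G : Multiset α → ℝ) :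
    iidExpect W N (fun S => F S + G S) = iidExpect W N F + iidExpect W N G := by
  simp only [iidExpect, mul_add, Finset.sum_add_distrib]

theorem iidExpect_const_mul (c : ℝ) (F : Multiset α → ℝ) :
    iidExpect W N (fun S => c * F S) = c * iidExpect W N F := by
  simp only [iidExpect, Finset.mul_sum, mul_left_comm]

theorem iidExpect_sum {ι : Type*} (s : Finset ι) (F : ι → Multiset α → ℝ) :
    iidExpect W N (fun S => ∑ i ∈ s, F i S) = ∑ i ∈ s, iidExpect W N (F i) := by
  simp only [iidExpect, Finset.mul_sum]
  exact Finset.sum_comm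

theorem iidExpect_const (hW : ∑ a, W a = 1) (c : ℝ) : iidExpect W N (fun _ => c) = c := by
  induction N with
  | zero => exact iidExpect_zero _
  | succ N ih => rw [iidExpect_succ, ih, ← Finset.sum_mul, hW, one_mul]

end IidExpect

section Conditioning

variable {α : Type*} [Fintype α] {W Wc : α → ℝ} {P : α → Prop} [DecidablePred P] {q : ℝ}

theorem iidExpect_succ_filter (hW : ∑ a, W a = 1) (hWc : ∑ a, Wc a = 1)
    (hq : ∀ a, (if P a then W a else 0) = q * Wc a) (N : ℕ) (F : Multiset α → ℝ) :
    iidExpect W (N + 1) (fun S => F (S.filter P)) =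
      q * iidExpect W N (fun S => ∑ a, Wc a * F (a ::ₘ S.filter P)) +
        (1 - q) * iidExpect W N (fun S => F (S.filter P)) := by
  have hsplit : ∀ a, W a * iidExpect W N (fun S => F ((a ::ₘ S).filter P)) =
      q * (Wc a * iidExpect W N (fun S => F (a ::ₘ S.filter P))) +
        (if P a then 0 else W a) * iidExpect W N (fun S => F (S.filter P)) := by
    intro a
    have hqa := hq a
    by_cases hPa : P a
    · simp only [hPa, if_true] at hqa ⊢
      simp only [Multiset.filter_cons_of_pos _ hPa, hqa]
      ring
    · simp only [hPa, if_false] at hqa ⊢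
      simp only [Multiset.filter_cons_of_neg _ hPa, ← mul_assoc, ← hqa]
      ring
  have hnot : ∑ a, (if P a then 0 else W a) = 1 - q := by
    have := Finset.sum_congr rfl fun a (_ : a ∈ Finset.univ) => hq a
    rw [← Finset.mul_sum, hWc, mul_one] at this
    rw [← hW, ← this, ← Finset.sum_sub_distrib]
    exact Finset.sum_congr rfl fun a _ => by split_ifs <;> ring
  rw [iidExpect_succ, Finset.sum_congr rfl fun a _ => hsplit a, Finset.sum_add_distrib,
    ← Finset.mul_sum, ← Finset.sum_mul, hnot, iidExpect_sum]
  simp only [iidExpect_const_mul]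

/-- By `hq`, `Wc` is `W` conditioned on `P` and `q` is the mass of `P`: given that `k` of the
samples fall in `P`, these are `k` independent samples from `Wc`. -/
theorem iidExpect_filter (hW : ∑ a, W a = 1) (hWc : ∑ a, Wc a = 1)
    (hq : ∀ a, (if P a then W a else 0) = q * Wc a) (N : ℕ) (F : Multiset α → ℝ) :
    iidExpect W N (fun S => F (S.filter P)) =
      iidExpect W N (fun S => iidExpect Wc (S.filter P).card F) := by
  induction N generalizing F with
  | zero => simp [iidExpect_zero]
  | succ N ih =>
    rw [iidExpect_succ_filter hW hWc hq,
      iidExpect_succ_filter hW hWc hq N (fun T => iidExpect Wc T.card F), ih F,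
      ih fun T => ∑ a, Wc a * F (a ::ₘ T)]
    congr 3 with S
    simp only [Multiset.card_cons, ← Finset.sum_mul, hWc, one_mul, iidExpect_succ,
      iidExpect_sum, iidExpect_const_mul]

theorem iidExpect_filter_le (hW0 : ∀ a, 0 ≤ W a) (hW : ∑ a, W a = 1) (hWc0 : ∀ a, 0 ≤ Wc a)
    (hWc : ∑ a, Wc a = 1) (hq : ∀ a, (if P a then W a else 0) = q * Wc a) {N m : ℕ} {ε : ℝ}
    (hε0 : 0 ≤ ε) {F : Multiset α → ℝ} (hF : ∀ S, F S ≤ 1)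
    (hε : ∀ k, m ≤ k → iidExpect Wc k F ≤ ε) :
    iidExpect W N (fun S => F (S.filter P)) ≤
      ε + iidExpect W N (fun S => if (S.filter P).card < m then 1 else 0) := by
  rw [iidExpect_filter hW hWc hq, ← iidExpect_const (N := N) hW ε, ← iidExpect_add]
  refine iidExpect_mono hW0 fun S => ?_
  split_ifs with hk
  · linarith [iidExpect_mono (N := (S.filter P).card) hWc0 hF,
      iidExpect_const (N := (S.filter P).card) hWc 1]
  · linarith [hε _ (not_lt.mp hk)]

end Conditioning

section Chebyshev

variable {α : Type*} [Fintype α] {W : α → ℝ} {P : α → Prop} [DecidablePred P] {q : ℝ}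

theorem iidExpect_card_filter_sub_sq (hW : ∑ a, W a = 1)
    (hq : ∑ a, (if P a then W a else 0) = q) (N : ℕ) :
    iidExpect W N (fun S => (((S.filter P).card : ℝ) - N * q) ^ 2) = N * (q - q ^ 2) := by
  induction N with
  | zero => simp [iidExpect_zero]
  | succ N ih =>
    set X : Multiset α → ℝ := fun S => ((S.filter P).card : ℝ) - N * q
    have hstep : ∀ a,
        iidExpect W N (fun S => ((((a ::ₘ S).filter P).card : ℝ) - (N + 1 : ℕ) * q) ^ 2) =
          N * (q - q ^ 2) + 2 * iidExpect W N X * ((if P a then 1 else 0) - q)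
          + ((if P a then 1 else 0) - q) ^ 2 := by
      intro a
      have hX : ∀ S, ((((a ::ₘ S).filter P).card : ℝ) - (N + 1 : ℕ) * q) ^ 2 =
          X S ^ 2 + (2 * ((if P a then 1 else 0) - q) * X S
            + ((if P a then 1 else 0) - q) ^ 2) := by
        intro S
        by_cases hPa : P a <;>
          simp [X, hPa, Multiset.filter_cons_of_pos, Multiset.filter_cons_of_neg] <;> ring
      simp only [hX, iidExpect_add, iidExpect_const_mul, iidExpect_const hW, ih, X]
      ring
    have hmean : ∑ a, W a * ((if P a then 1 else 0) - q) = 0 := by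
      simp only [mul_sub, mul_ite, mul_one, mul_zero, Finset.sum_sub_distrib, hq,
        ← Finset.sum_mul, hW]
      ring
    have hvar : ∑ a, W a * ((if P a then 1 else 0) - q) ^ 2 = q - q ^ 2 := by
      have : ∀ a, W a * ((if P a then 1 else 0) - q) ^ 2 =
          (1 - 2 * q) * (if P a then W a else 0) + q ^ 2 * W a := by
        intro a; split_ifs <;> ring
      simp only [this, Finset.sum_add_distrib, ← Finset.mul_sum, hq, hW]
      ring
    rw [iidExpect_succ]
    simp only [hstep, mul_add, Finset.sum_add_distrib, ← Finset.sum_mul, hW, mul_left_comm (W _),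
      ← Finset.mul_sum, hmean, hvar]
    push_cast
    ring

theorem iidExpect_card_filter_lt_le (hW0 : ∀ a, 0 ≤ W a) (hW : ∑ a, W a = 1)
    (hq : ∑ a, (if P a then W a else 0) = q) {N m : ℕ} (hNq : 0 < N * q)
    (hm : 2 * m ≤ N * q) :
    iidExpect W N (fun S => if (S.filter P).card < m then 1 else 0) ≤ 4 / (N * q) := by
  have hK : 0 < (N * q / 2) ^ 2 := by positivity
  have hpt : ∀ S : Multiset α, (if (S.filter P).card < m then (1 : ℝ) else 0) ≤
      (((S.filter P).card : ℝ) - N * q) ^ 2 / (N * q / 2) ^ 2 := by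
    intro S
    split_ifs with hc
    · have : ((S.filter P).card : ℝ) < m := by exact_mod_cast hc
      rw [one_le_div hK]
      nlinarith
    · positivity
  calc _ ≤ iidExpect W N (fun S => (((S.filter P).card : ℝ) - N * q) ^ 2 / (N * q / 2) ^ 2) :=
        iidExpect_mono hW0 hpt
    _ = N * (q - q ^ 2) / (N * q / 2) ^ 2 := by
        simp only [div_eq_inv_mul, iidExpect_const_mul, iidExpect_card_filter_sub_sq hW hq]
    _ ≤ 4 / (N * q) := by
        rw [div_le_div_iff₀ hK hNq]
        have hq0 : 0 < q := pos_of_mul_pos_right hNq (Nat.cast_nonneg N)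
        nlinarith [sq_nonneg q, mul_pos hNq hNq]

theorem mul_iidExpect_card_filter_lt_le (hW0 : ∀ a, 0 ≤ W a) (hW : ∑ a, W a = 1)
    (hq : ∑ a, (if P a then W a else 0) = q) {N : ℕ} (hN : 0 < N) (m : ℕ) :
    q * iidExpect W N (fun S => if (S.filter P).card < m then 1 else 0) ≤
      max (2 * (m : ℝ)) 4 / N := by
  have hN' : (0 : ℝ) < N := by exact_mod_cast hN
  have hq0 : 0 ≤ q := hq ▸ Finset.sum_nonneg fun a _ => by split_ifs <;> simp [hW0]
  have hprob : iidExpect W N (fun S => if (S.filter P).card < m then 1 else 0) ≤ 1 := by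
    calc _ ≤ iidExpect W N (fun _ => 1) := iidExpect_mono hW0 fun S => by split_ifs <;> norm_num
      _ = 1 := iidExpect_const hW 1
  rcases hq0.eq_or_lt with rfl | hqpos
  · rw [zero_mul]; positivity
  rcases le_or_gt (2 * (m : ℝ)) (N * q : ℝ) with hm | hm
  · calc _ ≤ q * (4 / (N * q)) :=
          mul_le_mul_of_nonneg_left (iidExpect_card_filter_lt_le hW0 hW hq (by positivity) hm) hq0
      _ = 4 / N := by field_simp
      _ ≤ max (2 * (m : ℝ)) 4 / N := by gcongr; exact le_max_right _ _
  · calc _ ≤ q := mul_le_of_le_one_right hq0 hprob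
      _ ≤ 2 * m / N := by rw [le_div_iff₀ hN']; linarith
      _ ≤ max (2 * (m : ℝ)) 4 / N := by gcongr; exact le_max_left _ _

end Chebyshev

theorem mul_iidExpect_filter_le {α : Type*} [Fintype α] {W Wc : α → ℝ} {P : α → Prop}
    [DecidablePred P] {q : ℝ} (hW0 : ∀ a, 0 ≤ W a) (hW : ∑ a, W a = 1)
    (hWc0 : ∀ a, 0 ≤ Wc a) (hWc : ∑ a, Wc a = 1) (hq : ∀ a, (if P a then W a else 0) = q * Wc a)
    {N m : ℕ} (hN : 0 < N) {ε : ℝ} (hε0 : 0 ≤ ε) {F : Multiset α → ℝ} (hF : ∀ S, F S ≤ 1)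
    (hε : ∀ k, m ≤ k → iidExpect Wc k F ≤ ε) :
    q * iidExpect W N (fun S => F (S.filter P)) ≤ q * ε + max (2 * (m : ℝ)) 4 / N := by
  have hqsum : ∑ a, (if P a then W a else 0) = q := by
    simp only [hq, ← Finset.mul_sum, hWc, mul_one]
  have hq0 : 0 ≤ q := hqsum ▸ Finset.sum_nonneg fun a _ => by split_ifs <;> simp [hW0]
  have hconditioned := mul_le_mul_of_nonneg_left
    (iidExpect_filter_le (N := N) hW0 hW hWc0 hWc hq hε0 hF hε) hq0
  linarith [mul_iidExpect_card_filter_lt_le hW0 hW hqsum hN m]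

theorem consistent_update {n : ℕ} {x : Cube n} {ℓ : Rst n} {i : Fin n} (h : ℓ i = none)
    (b : Bool) :
    Consistent x (Function.update ℓ i (some b)) ↔ Consistent x ℓ ∧ x i = b := by
  constructor
  · intro hc
    refine ⟨fun j bj hj => ?_, hc i b (by simp)⟩
    have hji : j ≠ i := by rintro rfl; simp [h] at hj
    exact hc j bj (by simpa [Function.update_of_ne hji] using hj)
  · rintro ⟨hc, rfl⟩ j bj hj
    by_cases hji : j = i
    · subst hji; simpa using hj
    · exact hc j bj (by simpa [Function.update_of_ne hji] using hj)

section Distributions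

variable {n : ℕ} {D : Cube n → ℝ} {f : Cube n → Bool}

theorem labD_nonneg (hD : ∀ x, 0 ≤ D x) (p : Lab n) : 0 ≤ labD D f p := by
  unfold labD; split_ifs <;> simp [hD]

theorem sum_labD (D : Cube n → ℝ) (f : Cube n → Bool) : ∑ p, labD D f p = ∑ x, D x := by
  rw [Fintype.sum_prod_type]
  refine Finset.sum_congr rfl fun x _ => ?_
  cases hfx : f x <;> simp [labD, hfx]

theorem errD_labD (h : Cube n → Bool) (D : Cube n → ℝ) (f : Cube n → Bool) :
    errD h (labD D f) = ∑ x, if h x ≠ f x then D x else 0 := by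
  rw [errD, Fintype.sum_prod_type]
  refine Finset.sum_congr rfl fun x _ => ?_
  cases hfx : f x <;> cases hhx : h x <;> simp [labD, hfx, hhx]

theorem errD_le_one (h : Cube n → Bool) {D : Lab n → ℝ} (hD : ∀ p, 0 ≤ D p)
    (hD1 : ∑ p, D p = 1) : errD h D ≤ 1 :=
  hD1 ▸ Finset.sum_le_sum fun p _ => by split_ifs <;> simp [hD]

theorem rmass_nonneg (hD : ∀ x, 0 ≤ D x) (ρ : Rst n) : 0 ≤ rmass D ρ :=
  Finset.sum_nonneg fun x _ => hD x

theorem condD_nonneg (hD : ∀ x, 0 ≤ D x) (ρ : Rst n) (x : Cube n) : 0 ≤ condD D ρ x := by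
  unfold condD; split_ifs <;> simp [div_nonneg, hD, rmass_nonneg]

theorem sum_condD {ρ : Rst n} (hρ : rmass D ρ ≠ 0) : ∑ x, condD D ρ x = 1 := by
  simp only [condD]
  rw [← Finset.sum_filter, ← Finset.sum_div, ← rmass, div_self hρ]

/-- When `ρ` has mass zero, `condD D ρ` is the junk value `0`, but so is `D` on `ρ`. -/
theorem rmass_mul_condD (hD : ∀ x, 0 ≤ D x) (ρ : Rst n) (x : Cube n) :
    rmass D ρ * condD D ρ x = if Consistent x ρ then D x else 0 := by
  unfold condD
  split_ifs with hc
  · rcases eq_or_ne (rmass D ρ) 0 with h | h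
    · rw [h, zero_mul, eq_comm]
      exact (Finset.sum_eq_zero_iff_of_nonneg fun x _ => hD x).1 h x (by simpa using hc)
    · field_simp
  · rw [mul_zero]

theorem ite_labD_eq_rmass_mul (hD : ∀ x, 0 ≤ D x) (ρ : Rst n) (p : Lab n) :
    (if Consistent p.1 ρ then labD D f p else 0) = rmass D ρ * labD (condD D ρ) f p := by
  simp only [labD, mul_ite, mul_zero, rmass_mul_condD hD]
  split_ifs <;> rfl

theorem rmass_mul_errD_condD (hD : ∀ x, 0 ≤ D x) (ρ : Rst n) (h : Cube n → Bool) :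
    rmass D ρ * errD h (labD (condD D ρ) f) =
      ∑ x, if h x ≠ f x then (if Consistent x ρ then D x else 0) else 0 := by
  simp only [errD_labD, Finset.mul_sum, mul_ite, mul_zero, rmass_mul_condD hD]

end Distributions

namespace IsDT

variable {n d : ℕ} {T : Finset (Rst n)} {D : Cube n → ℝ} {f : Cube n → Bool}

theorem existsUnique_consistent (hT : IsDT n d T) (x : Cube n) :
    ∃! ℓ, ℓ ∈ T ∧ Consistent x ℓ := by
  induction hT with
  | leaf => exact ⟨fun _ => none, by simp [Consistent], fun ℓ h => by simpa using h.1⟩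
  | @node d i T₀ T₁ _ _ h₀ h₁ ih₀ ih₁ =>
    simp only [Finset.mem_union, Finset.mem_image]
    cases hxi : x i
    · obtain ⟨ℓ, ⟨hℓ, hc⟩, hu⟩ := ih₀
      refine ⟨_, ⟨.inl ⟨ℓ, hℓ, rfl⟩, (consistent_update (h₀ ℓ hℓ) _).2 ⟨hc, hxi⟩⟩, ?_⟩
      rintro _ ⟨⟨ℓ', hℓ', rfl⟩ | ⟨ℓ', hℓ', rfl⟩, hc'⟩
      · rw [hu ℓ' ⟨hℓ', ((consistent_update (h₀ ℓ' hℓ') _).1 hc').1⟩]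
      · simpa [hxi] using ((consistent_update (h₁ ℓ' hℓ') _).1 hc').2
    · obtain ⟨ℓ, ⟨hℓ, hc⟩, hu⟩ := ih₁
      refine ⟨_, ⟨.inr ⟨ℓ, hℓ, rfl⟩, (consistent_update (h₁ ℓ hℓ) _).2 ⟨hc, hxi⟩⟩, ?_⟩
      rintro _ ⟨⟨ℓ', hℓ', rfl⟩ | ⟨ℓ', hℓ', rfl⟩, hc'⟩
      · simpa [hxi] using ((consistent_update (h₀ ℓ' hℓ') _).1 hc').2
      · rw [hu ℓ' ⟨hℓ', ((consistent_update (h₁ ℓ' hℓ') _).1 hc').1⟩]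

theorem card_le (hT : IsDT n d T) : T.card ≤ 2 ^ d := by
  induction hT with
  | leaf => simp
  | node i _ _ _ _ ih₀ ih₁ =>
    grw [Finset.card_union_le, Finset.card_image_le, Finset.card_image_le, ih₀, ih₁]
    omega

theorem treeHyp_eq (hT : IsDT n d T) (H : Rst n → Cube n → Bool) {x : Cube n} {ℓ : Rst n}
    (hℓ : ℓ ∈ T) (hc : Consistent x ℓ) : treeHyp T H x = H ℓ x := by
  have hex : ∃ ℓ', ℓ' ∈ T ∧ Consistent x ℓ' := ⟨ℓ, hℓ, hc⟩
  rw [treeHyp, dif_pos hex, (hT.existsUnique_consistent x).unique hex.choose_spec ⟨hℓ, hc⟩]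

theorem sum_sum_consistent {M : Type*} [AddCommMonoid M] (hT : IsDT n d T) (g : Cube n → M) :
    ∑ ℓ ∈ T, ∑ x, (if Consistent x ℓ then g x else 0) = ∑ x, g x := by
  rw [Finset.sum_comm]
  refine Finset.sum_congr rfl fun x _ => ?_
  obtain ⟨ℓ, ⟨hℓ, hc⟩, hu⟩ := hT.existsUnique_consistent x
  rw [Finset.sum_eq_single_of_mem ℓ hℓ fun ℓ' hℓ' hne => if_neg fun hc' => hne (hu ℓ' ⟨hℓ', hc'⟩),
    if_pos hc]

theorem sum_rmass (hT : IsDT n d T) (D : Cube n → ℝ) : ∑ ℓ ∈ T, rmass D ℓ = ∑ x, D x := by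
  simp only [rmass, Finset.sum_filter, hT.sum_sum_consistent]

theorem errD_treeHyp (hT : IsDT n d T) (hD : ∀ x, 0 ≤ D x) (H : Rst n → Cube n → Bool) :
    errD (treeHyp T H) (labD D f) = ∑ ℓ ∈ T, rmass D ℓ * errD (H ℓ) (labD (condD D ℓ) f) := by
  rw [errD_labD, ← hT.sum_sum_consistent]
  refine Finset.sum_congr rfl fun ℓ hℓ => ?_
  rw [rmass_mul_errD_condD hD]
  refine Finset.sum_congr rfl fun x _ => ?_
  by_cases hc : Consistent x ℓ
  · simp [hc, hT.treeHyp_eq H hℓ hc]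
  · simp [hc]

theorem iidExpect_errD_treeHyp (hT : IsDT n d T) (hD : ∀ x, 0 ≤ D x)
    (A : Multiset (Lab n) → Cube n → Bool) (N : ℕ) :
    iidExpect (labD D f) N
        (fun S => errD (treeHyp T fun ρ => A (S.filter fun p => Consistent p.1 ρ)) (labD D f)) =
      ∑ ℓ ∈ T, rmass D ℓ * iidExpect (labD D f) N
        (fun S => errD (A (S.filter fun p => Consistent p.1 ℓ)) (labD (condD D ℓ) f)) := by
  simp only [hT.errD_treeHyp hD, ← iidExpect_const_mul, ← iidExpect_sum]

end IsDT

theorem rmass_mul_iidExpect_errD_le {n m N : ℕ} {ε : ℝ} {D : Cube n → ℝ} {f : Cube n → Bool}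
    (hD : ∀ x, 0 ≤ D x) (hD1 : ∑ x, D x = 1) (hN : 0 < N) (hε : 0 ≤ ε)
    (A : Multiset (Lab n) → Cube n → Bool) (ℓ : Rst n)
    (hA : 0 < rmass D ℓ → ∀ k, m ≤ k →
      iidExpect (labD (condD D ℓ) f) k (fun S => errD (A S) (labD (condD D ℓ) f)) ≤ ε) :
    rmass D ℓ * iidExpect (labD D f) N
        (fun S => errD (A (S.filter fun p => Consistent p.1 ℓ)) (labD (condD D ℓ) f)) ≤
      rmass D ℓ * ε + max (2 * (m : ℝ)) 4 / N := by
  rcases (rmass_nonneg hD ℓ).eq_or_lt with h | h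
  · rw [← h, zero_mul, zero_mul, zero_add]; positivity
  have hcond := labD_nonneg (f := f) (condD_nonneg hD ℓ)
  have hcond1 : ∑ p, labD (condD D ℓ) f p = 1 := by rw [sum_labD, sum_condD h.ne']
  exact mul_iidExpect_filter_le (labD_nonneg hD) (by rw [sum_labD, hD1]) hcond hcond1
    (ite_labD_eq_rmass_mul hD ℓ) hN hε (fun S => errD_le_one _ hcond hcond1) (hA h)

theorem true_tree_has_low_true_error_general
    (n m d : ℕ) (ε : ℝ) (hε : 0 < ε)
    (C : Set (Cube n → Bool)) (𝒟 : Set (Cube n → ℝ))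
    (A : Multiset (Lab n) → Cube n → Bool)
    (hA : ∀ D ∈ 𝒟, ∀ f ∈ C, ∀ k : ℕ, m ≤ k →
      ∑ y : Fin k → Lab n, (∏ i, labD D f (y i)) * errD (A (toMS y)) (labD D f) ≤ ε)
    (Dstar : Cube n → ℝ) (hD0 : ∀ x, 0 ≤ Dstar x) (hD1 : ∑ x : Cube n, Dstar x = 1)
    (Tstar : Finset (Rst n)) (hTstar : IsDT n d Tstar)
    (hdecomp : ∀ ℓ ∈ Tstar, 0 < rmass Dstar ℓ → condD Dstar ℓ ∈ 𝒟)
    (f : Cube n → Bool) (hf : f ∈ C)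
    (mtrain : ℕ) (hmtrain : ((2 : ℝ) ^ d / ε) * max (2 * (m : ℝ)) 8 ≤ (mtrain : ℝ)) :
    ∑ y : Fin mtrain → Lab n, (∏ i, labD Dstar f (y i)) *
        errD (treeHyp Tstar
                (fun ρ => A ((toMS y).filter (fun p => Consistent p.1 ρ))))
             (labD Dstar f)
      ≤ 2 * ε := by
  have hN : (0 : ℝ) < mtrain := lt_of_lt_of_le (by positivity) hmtrain
  have hbudget : 2 ^ d * (max (2 * (m : ℝ)) 4 / mtrain) ≤ ε := by
    rw [← mul_div_assoc, div_le_iff₀ hN]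
    calc (2 : ℝ) ^ d * max (2 * (m : ℝ)) 4 ≤ 2 ^ d * max (2 * (m : ℝ)) 8 := by gcongr; norm_num
      _ = ε * ((2 ^ d / ε) * max (2 * (m : ℝ)) 8) := by field_simp
      _ ≤ ε * mtrain := by gcongr
  calc _ = ∑ ℓ ∈ Tstar, rmass Dstar ℓ * iidExpect (labD Dstar f) mtrain
        (fun S => errD (A (S.filter fun p => Consistent p.1 ℓ)) (labD (condD Dstar ℓ) f)) :=
        hTstar.iidExpect_errD_treeHyp hD0 A mtrain
    _ ≤ ∑ ℓ ∈ Tstar, (rmass Dstar ℓ * ε + max (2 * (m : ℝ)) 4 / mtrain) :=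
        Finset.sum_le_sum fun ℓ hℓ => rmass_mul_iidExpect_errD_le hD0 hD1 (by exact_mod_cast hN)
          hε.le A ℓ fun hq => hA _ (hdecomp ℓ hℓ hq) f hf
    _ = ε + Tstar.card * (max (2 * (m : ℝ)) 4 / mtrain) := by
        rw [Finset.sum_add_distrib, ← Finset.sum_mul, hTstar.sum_rmass, hD1, one_mul,
          Finset.sum_const, nsmul_eq_mul]
    _ ≤ ε + 2 ^ d * (max (2 * (m : ℝ)) 4 / mtrain) := by
        gcongr
        exact_mod_cast hTstar.card_le
    _ ≤ 2 * ε := by linarith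

/-- existence-of-a-tree-with-low-error claim. If `A` learns every `D ∈ 𝒟`
to expected error `ε` from `≥ m` i.i.d. samples, `𝒟` is closed under restrictions, `D*`
has a depth-`d` decomposition into `𝒟` witnessed by `T*`, and `m_train ≥ (2^d/ε)·max(2m,8)`,
then training `A` on the restricted training sets yields `E[error(T*∘H, D*_f)] ≤ 2ε`. -/
theorem true_tree_has_low_true_error
    (n m d : ℕ) (ε : ℝ) (hε : 0 < ε)
    (C : Set (Cube n → Bool)) (𝒟 : Set (Cube n → ℝ))
    (hclosed : ∀ D ∈ 𝒟, ∀ ρ : Rst n, 0 < rmass D ρ → condD D ρ ∈ 𝒟)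
    (A : Multiset (Lab n) → Cube n → Bool)
    (hA : ∀ D ∈ 𝒟, ∀ f ∈ C, ∀ k : ℕ, m ≤ k →
      ∑ y : Fin k → Lab n, (∏ i, labD D f (y i)) * errD (A (toMS y)) (labD D f) ≤ ε)
    (Dstar : Cube n → ℝ) (hD0 : ∀ x, 0 ≤ Dstar x) (hD1 : ∑ x : Cube n, Dstar x = 1)
    (Tstar : Finset (Rst n)) (hTstar : IsDT n d Tstar)
    (hdecomp : ∀ ℓ ∈ Tstar, 0 < rmass Dstar ℓ → condD Dstar ℓ ∈ 𝒟)
    (f : Cube n → Bool) (hf : f ∈ C)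
    (mtrain : ℕ) (hmtrain : ((2 : ℝ) ^ d / ε) * max (2 * (m : ℝ)) 8 ≤ (mtrain : ℝ)) :
    ∑ y : Fin mtrain → Lab n, (∏ i, labD Dstar f (y i)) *
        errD (treeHyp Tstar
                (fun ρ => A ((toMS y).filter (fun p => Consistent p.1 ρ))))
             (labD Dstar f)
      ≤ 2 * ε :=
  true_tree_has_low_true_error_general n m d ε hε C 𝒟 A hA Dstar hD0 hD1 Tstar hTstar hdecomp f hf
    mtrain hmtrain
end

section
/- Let d ≥ 0, s ≥ 1, ε ≥ 0, and ε_a ∈ (0,1). Let S be a finite nonempty labeled multiset of pairs in {±1}^n × {±1}, and let H assign to each restriction ρ of depth at most d a hypothesis H(ρ) : {±1}^n → {±1}. Suppose there exist pairwise disjoint restrictions ρ₁, …, ρ_s, each of depth at most d, such that error(P∘H, S) ≤ ε, where P∘H(x) = H(ρ_i)(x) for the unique i (if any) with x consistent with ρ_i and P∘H(x) = ⊥ (counted as a misclassification) otherwise. Then there exists an ordered list L = (π₁, …, π_k) of restrictions, each of depth at most d, with k ≤ ⌈2s·ln(1/ε_a)⌉, such that error(L∘H, S) ≤ ε_a + 2ε·(1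 + ln(1/ε_a)), where L∘H(x) = H(π_j)(x) for the first index j with x consistent with π_j, and L∘H(x) = ⊥ (counted as a misclassification) if no π_j is consistent with x. -/
open scoped Classical

/-!
No greedy search is needed for the existence claim. Among the `s` pieces of the partition, the
`k = min ⌈2s·ln(1/εa)⌉ s` pieces containing the most samples contain at least a `k/s ≥ 1 - εa`
fraction of the samples the whole partition covers (averaging, and `ln(1/εa) ≥ 1 - εa`), and the
partition covers all but an `ε` fraction of `S`. Since the pieces are disjoint, the list of these
`k` pieces, in any order, agrees with `P ∘ H` wherever it is defined, so its error is at most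
`1 - (1 - εa)(1 - ε) + ε ≤ εa + 2ε`.
-/

namespace Finset

theorem exists_subset_card_eq_mul_sum_le {ι R : Type*} [CommSemiring R] [LinearOrder R]
    [IsOrderedRing R] (f : ι → R) (u : Finset ι) {k : ℕ} (hk : k ≤ u.card) :
    ∃ A ⊆ u, A.card = k ∧ (k : R) * ∑ i ∈ u, f i ≤ u.card * ∑ i ∈ A, f i := by
  induction u using Finset.strongInduction with
  | H u ih =>
  rcases hk.eq_or_lt with rfl | hlt
  · exact ⟨u, subset_rfl, rfl, le_rfl⟩
  obtain ⟨i₀, hi₀, hmin⟩ := u.exists_min_image f (card_pos.mp (k.zero_le.trans_lt hlt))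
  have hcard : (u.erase i₀).card + 1 = u.card := card_erase_add_one hi₀
  obtain ⟨A, hAu, hAk, hA⟩ := ih _ (erase_ssubset hi₀) (by omega)
  have hA_ge : k • f i₀ ≤ ∑ i ∈ A, f i :=
    hAk ▸ card_nsmul_le_sum A f (f i₀) fun i hi => hmin i (mem_of_mem_erase (hAu hi))
  refine ⟨A, hAu.trans (erase_subset _ _), hAk, ?_⟩
  calc (k : R) * ∑ i ∈ u, f i = k * ∑ i ∈ u.erase i₀, f i + k • f i₀ := by
        rw [← sum_erase_add _ _ hi₀, mul_add, nsmul_eq_mul]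
    _ ≤ (u.erase i₀).card * ∑ i ∈ A, f i + ∑ i ∈ A, f i := add_le_add hA hA_ge
    _ = u.card * ∑ i ∈ A, f i := by rw [← hcard]; push_cast; ring

end Finset

namespace Multiset

variable {α : Type*}

theorem card_filter_or_le (p q : α → Prop) [DecidablePred p] [DecidablePred q]
    (S : Multiset α) :
    card (S.filter fun a => p a ∨ q a) ≤ card (S.filter p) + card (S.filter q) := by
  have := congrArg card (filter_add_filter p q S)
  simp only [card_add] at this
  omega

theorem card_filter_exists_eq_sum {ι : Type*} (P : ι → α → Prop) [∀ i, DecidablePred (P i)]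
    (S : Multiset α) (hdisj : ∀ i j, i ≠ j → ∀ a, P i a → P j a → False) (A : Finset ι)
    [DecidablePred fun a => ∃ i ∈ A, P i a] :
    card (S.filter fun a => ∃ i ∈ A, P i a) = ∑ i ∈ A, card (S.filter (P i)) := by
  classical
  suffices h : ∀ B : Finset ι,
      card (S.filter fun a => ∃ i ∈ B, P i a) = ∑ i ∈ B, card (S.filter (P i)) by
    convert h A
  intro B
  induction B using Finset.induction_on with
  | empty => simp
  | insert i B hi ih =>
    have hboth : S.filter (fun a => P i a ∧ ∃ j ∈ B, P j a) = 0 :=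
      filter_eq_nil.2 fun a _ ⟨hia, j, hj, hja⟩ =>
        hdisj i j (by rintro rfl; exact hi hj) a hia hja
    rw [Finset.sum_insert hi, ← ih, ← card_add, filter_add_filter, hboth, add_zero]
    exact congrArg card (filter_congr fun a _ => by simp only [Finset.mem_insert, exists_eq_or_imp])

theorem card_filter_not_exists_add_sum {ι : Type*} (P : ι → α → Prop) [∀ i, DecidablePred (P i)]
    (S : Multiset α) (hdisj : ∀ i j, i ≠ j → ∀ a, P i a → P j a → False) (A : Finset ι)
    [DecidablePred fun a => ∃ i ∈ A, P i a] :
    card (S.filter fun a => ¬∃ i ∈ A, P i a) + ∑ i ∈ A, card (S.filter (P i)) = card S := by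
  rw [← card_filter_exists_eq_sum P S hdisj A, add_comm, ← card_add, filter_add_not]

end Multiset

theorem card_filter_le_of_errSo_le {n : ℕ} {h : Cube n → Option Bool} {S : Multiset (Lab n)}
    {ε : ℝ} (hh : errSo h S ≤ ε) :
    (Multiset.card (S.filter fun p => h p.1 ≠ some p.2) : ℝ) ≤ ε * Multiset.card S := by
  rcases eq_or_ne S 0 with rfl | hS
  · simp
  · rwa [errSo, div_le_iff₀ (by exact_mod_cast Multiset.card_pos.2 hS)] at hh

theorem errSo_le_of_card_filter_le {n : ℕ} {h : Cube n → Option Bool} {S : Multiset (Lab n)}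
    {ε : ℝ} (hε : 0 ≤ ε)
    (hh : (Multiset.card (S.filter fun p => h p.1 ≠ some p.2) : ℝ) ≤ ε * Multiset.card S) :
    errSo h S ≤ ε :=
  div_le_of_le_mul₀ (Nat.cast_nonneg _) hε hh

theorem listHyp_eq_of_mem {n : ℕ} (H : Rst n → Cube n → Bool) {L : List (Rst n)} {x : Cube n}
    {π : Rst n} (hπ : π ∈ L) (hx : Consistent x π)
    (huniq : ∀ π' ∈ L, Consistent x π' → π' = π) :
    listHyp H L x = some (H π x) := by
  induction L with
  | nil => simp at hπ
  | cons a L ih =>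
    by_cases ha : Consistent x a
    · rw [listHyp, if_pos ha, huniq a List.mem_cons_self ha]
    · have hπL : π ∈ L := (List.mem_cons.1 hπ).resolve_left fun h => ha (h ▸ hx)
      rw [listHyp, if_neg ha]
      exact ih hπL fun π' hπ' => huniq π' (List.mem_cons_of_mem a hπ')

section Partition

variable {n s : ℕ} {ρ : Fin s → Rst n} (H : Rst n → Cube n → Bool)

theorem partHyp_eq_of_consistent
    (hdisj : ∀ i j : Fin s, i ≠ j →
      ∀ x : Cube n, Consistent x (ρ i) → Consistent x (ρ j) → False)
    {x : Cube n} {i : Fin s} (hx : Consistent x (ρ i)) :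
    partHyp ρ H x = some (H (ρ i) x) := by
  have hex : ∃ j, Consistent x (ρ j) := ⟨i, hx⟩
  have hi : hex.choose = i := by_contra fun hne => hdisj _ _ hne x hex.choose_spec hx
  rw [partHyp, dif_pos hex, hi]

theorem listHyp_map_eq_partHyp
    (hdisj : ∀ i j : Fin s, i ≠ j →
      ∀ x : Cube n, Consistent x (ρ i) → Consistent x (ρ j) → False)
    {l : List (Fin s)} {x : Cube n} (hx : ∃ i ∈ l, Consistent x (ρ i)) :
    listHyp H (l.map ρ) x = partHyp ρ H x := by
  obtain ⟨i, hi, hxi⟩ := hx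
  rw [partHyp_eq_of_consistent H hdisj hxi]
  refine listHyp_eq_of_mem H (List.mem_map_of_mem hi) hxi fun π' hπ' hxπ' => ?_
  obtain ⟨j, -, rfl⟩ := List.mem_map.1 hπ'
  exact congrArg ρ (by_contra fun hji => hdisj j i hji x hxπ' hxi)

theorem card_sub_sum_le_card_filter_partHyp_ne
    (hdisj : ∀ i j : Fin s, i ≠ j →
      ∀ x : Cube n, Consistent x (ρ i) → Consistent x (ρ j) → False)
    (S : Multiset (Lab n)) :
    (Multiset.card S : ℝ) - ∑ i, (Multiset.card (S.filter fun p => Consistent p.1 (ρ i)) : ℝ) ≤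
      Multiset.card (S.filter fun p => partHyp ρ H p.1 ≠ some p.2) := by
  have hsplit := Multiset.card_filter_not_exists_add_sum (fun i (p : Lab n) => Consistent p.1 (ρ i))
    S (fun i j hij p => hdisj i j hij p.1) Finset.univ
  have huncov : S.filter (fun p => ¬∃ i ∈ Finset.univ, Consistent p.1 (ρ i)) ≤
      S.filter fun p => partHyp ρ H p.1 ≠ some p.2 :=
    Multiset.monotone_filter_right S fun p hp => by
      simp only [Finset.mem_univ, true_and] at hp
      simp [partHyp, dif_neg hp]
  rw [sub_le_iff_le_add, ← hsplit]
  exact_mod_cast Nat.add_le_add_right (Multiset.card_le_card huncov) _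

theorem card_filter_listHyp_ne_le
    (hdisj : ∀ i j : Fin s, i ≠ j →
      ∀ x : Cube n, Consistent x (ρ i) → Consistent x (ρ j) → False)
    (A : Finset (Fin s)) (S : Multiset (Lab n)) :
    (Multiset.card (S.filter fun p => listHyp H (A.toList.map ρ) p.1 ≠ some p.2) : ℝ) ≤
      Multiset.card S - ∑ i ∈ A, (Multiset.card (S.filter fun p => Consistent p.1 (ρ i)) : ℝ) +
        Multiset.card (S.filter fun p => partHyp ρ H p.1 ≠ some p.2) := by
  have hsplit := Multiset.card_filter_not_exists_add_sum (fun i (p : Lab n) => Consistent p.1 (ρ i))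
    S (fun i j hij p => hdisj i j hij p.1) A
  have herr : S.filter (fun p => listHyp H (A.toList.map ρ) p.1 ≠ some p.2) ≤
      S.filter fun p => (¬∃ i ∈ A, Consistent p.1 (ρ i)) ∨ partHyp ρ H p.1 ≠ some p.2 :=
    Multiset.monotone_filter_right S fun p hp => or_iff_not_imp_left.2 fun hcov => by
      obtain ⟨i, hi, hpi⟩ := not_not.1 hcov
      rwa [← listHyp_map_eq_partHyp H hdisj ⟨i, Finset.mem_toList.2 hi, hpi⟩]
  have hle_or := (Multiset.card_le_card herr).trans (Multiset.card_filter_or_le _ _ S)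
  have hcount : Multiset.card (S.filter fun p => listHyp H (A.toList.map ρ) p.1 ≠ some p.2) +
      ∑ i ∈ A, Multiset.card (S.filter fun p => Consistent p.1 (ρ i)) ≤
      Multiset.card S + Multiset.card (S.filter fun p => partHyp ρ H p.1 ≠ some p.2) := by
    omega
  rw [sub_add_eq_add_sub, le_sub_iff_add_le]
  exact_mod_cast hcount

end Partition

theorem one_sub_mul_le_min_ceil_two_mul_log {a : ℝ} (ha : 0 < a) (s : ℕ) :
    (1 - a) * s ≤ (min ⌈2 * (s : ℝ) * Real.log (1 / a)⌉₊ s : ℕ) := by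
  have hlog : 1 - a ≤ Real.log (1 / a) := by
    simpa using Real.one_sub_inv_le_log_of_pos (one_div_pos.2 ha)
  have hs : (0 : ℝ) ≤ s := Nat.cast_nonneg s
  rw [Nat.cast_min]
  refine le_min ?_ (by nlinarith)
  rcases le_total a 1 with ha1 | ha1
  · exact (Nat.le_ceil _).trans' (by nlinarith)
  · exact (mul_nonpos_of_nonpos_of_nonneg (by linarith) hs).trans (Nat.cast_nonneg _)

theorem short_subcube_list_exists_general
    (n d s : ℕ) (hs : 1 ≤ s) (ε εa : ℝ) (hε : 0 ≤ ε)
    (hεa0 : 0 < εa) (hεa1 : εa < 1)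
    (S : Multiset (Lab n))
    (H : Rst n → Cube n → Bool)
    (ρ : Fin s → Rst n) (hρdepth : ∀ i, rdepth (ρ i) ≤ d)
    (hdisj : ∀ i j : Fin s, i ≠ j →
      ∀ x : Cube n, Consistent x (ρ i) → Consistent x (ρ j) → False)
    (herr : errSo (partHyp ρ H) S ≤ ε) :
    ∃ L : List (Rst n),
      (∀ π ∈ L, rdepth π ≤ d) ∧
      L.length ≤ ⌈2 * (s : ℝ) * Real.log (1 / εa)⌉₊ ∧
      errSo (listHyp H L) S ≤ εa + 2 * ε * (1 + Real.log (1 / εa)) := by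
  set c : Fin s → ℝ := fun i => Multiset.card (S.filter fun p => Consistent p.1 (ρ i))
  set k := min ⌈2 * (s : ℝ) * Real.log (1 / εa)⌉₊ s
  obtain ⟨A, -, hAk, hAavg⟩ :=
    Finset.univ.exists_subset_card_eq_mul_sum_le c (k := k) (by simp [k])
  refine ⟨A.toList.map ρ, by simpa using fun i _ => hρdepth i, by simp [hAk, k], ?_⟩
  have hpart := card_filter_le_of_errSo_le herr
  have hcov_all := card_sub_sum_le_card_filter_partHyp_ne H hdisj S
  have hlist := card_filter_listHyp_ne_le H hdisj A S
  have hcovA : (1 - εa) * ∑ i, c i ≤ ∑ i ∈ A, c i := by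
    have hs' : (0 : ℝ) < s := by exact_mod_cast hs
    have hk := one_sub_mul_le_min_ceil_two_mul_log hεa0 s
    have hc : 0 ≤ ∑ i, c i := by positivity
    simp only [Finset.card_univ, Fintype.card_fin] at hAavg
    refine le_of_mul_le_mul_left ?_ hs'
    nlinarith
  have hlog : 0 ≤ Real.log (1 / εa) := Real.log_nonneg (one_le_one_div hεa0 hεa1.le)
  have hN : (0 : ℝ) ≤ Multiset.card S := Nat.cast_nonneg _
  apply errSo_le_of_card_filter_le (by positivity)
  nlinarith [mul_le_mul_of_nonneg_left hcov_all (sub_nonneg.2 hεa1.le),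
    mul_nonneg (mul_nonneg hεa0.le hε) hN, mul_nonneg (mul_nonneg hε hlog) hN]

/-- existential content of the greedy `FindSubcube` lemma — if some size-`s`
disjoint subcube partition (of depth ≤ d pieces) achieves error ≤ ε on `S`, then there is an
ordered subcube list of length ≤ ⌈2s·ln(1/ε_a)⌉ whose list hypothesis has error at most
`ε_a + 2ε·(1 + ln(1/ε_a))` on `S`. -/
theorem short_subcube_list_exists
    (n d s : ℕ) (hd : 0 ≤ d) (hs : 1 ≤ s) (ε εa : ℝ) (hε : 0 ≤ ε)
    (hεa0 : 0 < εa) (hεa1 : εa < 1)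
    (S : Multiset (Lab n)) (hS : S ≠ 0)
    (H : Rst n → Cube n → Bool)
    (ρ : Fin s → Rst n) (hρdepth : ∀ i, rdepth (ρ i) ≤ d)
    (hdisj : ∀ i j : Fin s, i ≠ j →
      ∀ x : Cube n, Consistent x (ρ i) → Consistent x (ρ j) → False)
    (herr : errSo (partHyp ρ H) S ≤ ε) :
    ∃ L : List (Rst n),
      (∀ π ∈ L, rdepth π ≤ d) ∧
      L.length ≤ ⌈2 * (s : ℝ) * Real.log (1 / εa)⌉₊ ∧
      errSo (listHyp H L) S ≤ εa + 2 * ε * (1 + Real.log (1 / εa)) :=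
  short_subcube_list_exists_general n d s hs ε εa hε hεa0 hεa1 S H ρ hρdepth hdisj herr
end
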